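/- arXiv:q-alg/9412005 — 2 statements merged into one kernel-verified Lean document; each statement's English description precedes it below -/
import Mathlib

section
/- Let Ω(P) be a graded-differential *-algebra representing differential calculus on the bundle (properties diff1 and diff2). Then the extension F̂:Ω(P)→Ω(P)⊗̂Γ^∧ of F satisfies (F̂⊗id)F̂=(id⊗φ̂)F̂, where φ̂:Γ^∧→Γ^∧⊗̂Γ^∧ is the unique graded-differential extension of the comultiplication, and F̂ is hermitian: F̂∘* = (*⊗*)∘F̂. -/
open TensorProduct

noncomputable section

structure GrStarAlg (Ω : Type) [Ring Ω] [Algebra ℂ Ω] where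
  gr : ℕ → Submodule ℂ Ω
  direct : DirectSum.IsInternal gr
  proj : ℕ → Ω →ₗ[ℂ] Ω
  proj_mem : ∀ (n : ℕ) (x : Ω), proj n x ∈ gr n
  proj_of_mem : ∀ {n : ℕ} {x : Ω}, x ∈ gr n → proj n x = x
  proj_of_ne : ∀ {m n : ℕ} {x : Ω}, x ∈ gr n → m ≠ n → proj m x = 0
  one_mem : (1 : Ω) ∈ gr 0
  mul_mem : ∀ {m n : ℕ} {x y : Ω}, x ∈ gr m → y ∈ gr n → x * y ∈ gr (m + n)
  conj : Ω → Ω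
  conj_conj : ∀ x, conj (conj x) = x
  conj_add : ∀ x y, conj (x + y) = conj x + conj y
  conj_smul : ∀ (c : ℂ) (x : Ω), conj (c • x) = (starRingEnd ℂ) c • conj x
  conj_one : conj 1 = 1
  conj_mul : ∀ {m n : ℕ} {x y : Ω}, x ∈ gr m → y ∈ gr n →
    conj (x * y) = ((-1 : ℂ) ^ (m * n)) • (conj y * conj x)
  conj_mem : ∀ {n : ℕ} {x : Ω}, x ∈ gr n → conj x ∈ gr n

structure GDSA (Ω : Type) [Ring Ω] [Algebra ℂ Ω] extends GrStarAlg Ω where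
  d : Ω →ₗ[ℂ] Ω
  d_mem : ∀ {n : ℕ} {x : Ω}, x ∈ gr n → d x ∈ gr (n + 1)
  d_sq : ∀ x : Ω, d (d x) = 0
  leibniz : ∀ {n : ℕ} {x : Ω}, x ∈ gr n → ∀ y : Ω,
    d (x * y) = d x * y + ((-1 : ℂ) ^ n) • (x * d y)
  d_conj : ∀ x, d (conj x) = conj (d x)

variable (A : Type) [Ring A] [HopfAlgebra ℂ A]

def adA : A →ₗ[ℂ] A ⊗[ℂ] A :=
  (map LinearMap.id (LinearMap.mul' ℂ A)) ∘ₗ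
    (TensorProduct.assoc ℂ A A A).toLinearMap ∘ₗ
    (map ((TensorProduct.comm ℂ A A).toLinearMap ∘ₗ
      (map (HopfAlgebra.antipode (R := ℂ)) LinearMap.id)) LinearMap.id) ∘ₗ
    (TensorProduct.assoc ℂ A A A).symm.toLinearMap ∘ₗ
    (map LinearMap.id (Coalgebra.comul (R := ℂ))) ∘ₗ (Coalgebra.comul (R := ℂ))

/-- Differential calculus `Γ^∧` on the structure quantum group `G`, together with
its distinguished left-invariant part, the canonical map `π`, the right
`A`-module structure `∘`, the adjoint (right) coaction, and the extension `φ̂`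
of the comultiplication. -/
structure GroupCalc (A : Type) [Ring A] [HopfAlgebra ℂ A] [StarRing A]
    (Gw : Type) [Ring Gw] [Algebra ℂ Gw] where
  S : GDSA Gw
  ι : A →ₐ[ℂ] Gw
  ι_inj : Function.Injective ι
  ι_mem : ∀ a, ι a ∈ S.gr 0
  gr0_eq : ∀ x ∈ S.gr 0, ∃ a, ι a = x
  ι_conj : ∀ a, S.conj (ι a) = ι (star a)
  ιinv : Gw →ₗ[ℂ] A
  ιinv_ι : ∀ a, ιinv (ι a) = a
  ι_ιinv : ∀ x, ι (ιinv x) = S.proj 0 x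
  generated : ∀ W : Submodule ℂ Gw, (∀ a, ι a ∈ W) →
    (∀ x y, x ∈ W → y ∈ W → x * y ∈ W) → (∀ x ∈ W, S.d x ∈ W) → ∀ x, x ∈ W
  Inv : ℕ → Submodule ℂ Gw
  Inv_le : ∀ n, Inv n ≤ S.gr n
  Inv_one : (1 : Gw) ∈ Inv 0
  Inv_zero : ∀ x ∈ Inv 0, ∃ c : ℂ, x = c • (1 : Gw)
  Inv_mul : ∀ {m n : ℕ} {x y : Gw}, x ∈ Inv m → y ∈ Inv n → x * y ∈ Inv (m + n)
  Inv_d : ∀ {n : ℕ} {x : Gw}, x ∈ Inv n → S.d x ∈ Inv (n + 1)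
  Inv_conj : ∀ {n : ℕ} {x : Gw}, x ∈ Inv n → S.conj x ∈ Inv n
  InvT : Submodule ℂ Gw
  Inv_le_InvT : ∀ n, Inv n ≤ InvT
  InvT_eq : InvT = ⨆ n, Inv n
  π : A →ₗ[ℂ] Gw
  π_eq : π = (LinearMap.mul' ℂ Gw) ∘ₗ
      (map (ι.toLinearMap ∘ₗ HopfAlgebra.antipode (R := ℂ)) (S.d ∘ₗ ι.toLinearMap)) ∘ₗ
        (Coalgebra.comul (R := ℂ))
  π_mem : ∀ a, π a ∈ Inv 1
  π_surj : ∀ x ∈ Inv 1, ∃ a, π a = x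
  π_conj : ∀ a, S.conj (π a) = - π (star (HopfAlgebra.antipode (R := ℂ) a))
  Rid : Submodule ℂ A
  Rid_counit : ∀ a ∈ Rid, Coalgebra.counit (R := ℂ) a = (0 : ℂ)
  Rid_mul : ∀ a ∈ Rid, ∀ b : A, a * b ∈ Rid
  π_ker : ∀ a : A, π a = 0 ↔ a ∈ (Submodule.span ℂ {(1 : A)} ⊔ Rid)
  circ : Gw →ₗ[ℂ] A →ₗ[ℂ] Gw
  circ_eq : ∀ (θ : Gw) (a : A), circ θ a =
    (LinearMap.mul' ℂ Gw) ((map (ι.toLinearMap ∘ₗ HopfAlgebra.antipode (R := ℂ))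
      ((LinearMap.mulLeft ℂ θ) ∘ₗ ι.toLinearMap)) (Coalgebra.comul (R := ℂ) a))
  circ_Inv : ∀ {n : ℕ} {θ : Gw}, θ ∈ Inv n → ∀ a, circ θ a ∈ Inv n
  adj : Gw →ₗ[ℂ] Gw ⊗[ℂ] A
  adj_ι : ∀ a, adj (ι a) = (map ι.toLinearMap LinearMap.id) (Coalgebra.comul (R := ℂ) a)
  adj_mul : ∀ x y, adj (x * y) = adj x * adj y
  adj_d : ∀ x, adj (S.d x) = (map S.d LinearMap.id) (adj x)
  adj_counit : ∀ x, (TensorProduct.rid ℂ Gw)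
    ((map LinearMap.id (Coalgebra.counit (R := ℂ))) (adj x)) = x
  adj_π : ∀ a, adj (π a) = (map π LinearMap.id) (adA A a)
  adj_Inv : ∀ {n : ℕ} {θ : Gw}, θ ∈ Inv n →
    adj θ ∈ LinearMap.range (map (Inv n).subtype (LinearMap.id (M := A)))
  pInv : Gw →ₗ[ℂ] Gw
  pInv_mem : ∀ {n : ℕ} {x : Gw}, x ∈ S.gr n → pInv x ∈ Inv n
  pInv_id : ∀ x ∈ InvT, pInv x = x
  pInv_mod : ∀ (a : A) (x : Gw), pInv (ι a * x) = (Coalgebra.counit (R := ℂ) a) • pInv x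
  πInv : A →ₗ[ℂ] ↥(Inv 1)
  πInv_spec : ∀ a, ((πInv a : Gw)) = π a
  circInv : ↥(Inv 1) →ₗ[ℂ] A →ₗ[ℂ] ↥(Inv 1)
  circInv_spec : ∀ (θ : ↥(Inv 1)) (a : A), ((circInv θ a : Gw)) = circ (θ : Gw) a
  adjInv : ↥(Inv 1) →ₗ[ℂ] ↥(Inv 1) ⊗[ℂ] A
  adjInv_spec : ∀ θ, (map (Inv 1).subtype LinearMap.id) (adjInv θ) = adj (θ : Gw)
  conjInv : ↥(Inv 1) → ↥(Inv 1)
  conjInv_spec : ∀ θ, ((conjInv θ : Gw)) = S.conj (θ : Gw)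
  conjI2 : ↥(Inv 1) ⊗[ℂ] ↥(Inv 1) → ↥(Inv 1) ⊗[ℂ] ↥(Inv 1)
  conjI2_add : ∀ x y, conjI2 (x + y) = conjI2 x + conjI2 y
  conjI2_spec : ∀ x y : ↥(Inv 1), conjI2 (x ⊗ₜ y) = conjInv y ⊗ₜ conjInv x
  tmulG : (Gw ⊗[ℂ] Gw) →ₗ[ℂ] (Gw ⊗[ℂ] Gw) →ₗ[ℂ] (Gw ⊗[ℂ] Gw)
  tmulG_spec : ∀ {m n : ℕ} (w u θ η : Gw), θ ∈ S.gr m → u ∈ S.gr n →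
    tmulG (w ⊗ₜ θ) (u ⊗ₜ η) = ((-1 : ℂ) ^ (m * n)) • ((w * u) ⊗ₜ (θ * η))
  tdG : Gw ⊗[ℂ] Gw →ₗ[ℂ] Gw ⊗[ℂ] Gw
  tdG_spec : ∀ {n : ℕ} (w θ : Gw), w ∈ S.gr n →
    tdG (w ⊗ₜ θ) = S.d w ⊗ₜ θ + ((-1 : ℂ) ^ n) • (w ⊗ₜ S.d θ)
  hatφ : Gw →ₗ[ℂ] Gw ⊗[ℂ] Gw
  hatφ_ι : ∀ a, hatφ (ι a) = (map ι.toLinearMap ι.toLinearMap) (Coalgebra.comul (R := ℂ) a)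
  hatφ_mul : ∀ x y, hatφ (x * y) = tmulG (hatφ x) (hatφ y)
  hatφ_d : ∀ x, hatφ (S.d x) = tdG (hatφ x)

/-- A quantum principal `G`-bundle `P = (B, i, F)` over the quantum space `M`
represented by the *-algebra `V`. -/
structure QPB (A : Type) [Ring A] [HopfAlgebra ℂ A] [StarRing A]
    (V B : Type) [Ring V] [Algebra ℂ V] [StarRing V] [Ring B] [Algebra ℂ B] [StarRing B] where
  i : V →ₐ[ℂ] B
  i_star : ∀ v, i (star v) = star (i v)
  i_inj : Function.Injective i
  F : B →ₐ[ℂ] B ⊗[ℂ] A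
  F_star : ∀ (b : B) (s : Finset ℕ) (bk : ℕ → B) (ck : ℕ → A),
    F b = ∑ k ∈ s, bk k ⊗ₜ ck k → F (star b) = ∑ k ∈ s, star (bk k) ⊗ₜ star (ck k)
  coassoc_F : ∀ b, (TensorProduct.assoc ℂ B A A)
    ((map F.toLinearMap LinearMap.id) (F b)) = (map LinearMap.id (Coalgebra.comul (R := ℂ))) (F b)
  free : Function.Surjective ((LinearMap.mul' ℂ (B ⊗[ℂ] A)) ∘ₗ
    (map (Algebra.TensorProduct.includeLeft : B →ₐ[ℂ] B ⊗[ℂ] A).toLinearMap F.toLinearMap))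

/-- A differential calculus `Ω(P)` on a quantum principal bundle: a graded
differential *-algebra with `Ω⁰(P) = B`, generated by `B` (property *diff1*),
such that `F` extends to a homomorphism `F̂ : Ω(P) → Ω(P) ⊗̂ Γ^∧` of
graded-differential algebras (property *diff2*). -/
structure Calc (A : Type) [Ring A] [HopfAlgebra ℂ A] [StarRing A]
    (Gw : Type) [Ring Gw] [Algebra ℂ Gw]
    (V B : Type) [Ring V] [Algebra ℂ V] [StarRing V] [Ring B] [Algebra ℂ B] [StarRing B]
    (Ω : Type) [Ring Ω] [Algebra ℂ Ω]
    (C : GroupCalc A Gw) (P : QPB A V B) where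
  S : GDSA Ω
  ιB : B →ₐ[ℂ] Ω
  ιB_inj : Function.Injective ιB
  ιB_mem : ∀ b, ιB b ∈ S.gr 0
  gr0_eq : ∀ x ∈ S.gr 0, ∃ b, ιB b = x
  ιB_conj : ∀ b, S.conj (ιB b) = ιB (star b)
  generated : ∀ W : Submodule ℂ Ω, (∀ b, ιB b ∈ W) →
    (∀ x y, x ∈ W → y ∈ W → x * y ∈ W) → (∀ x ∈ W, S.d x ∈ W) → ∀ x, x ∈ W
  tmul : (Ω ⊗[ℂ] Gw) →ₗ[ℂ] (Ω ⊗[ℂ] Gw) →ₗ[ℂ] (Ω ⊗[ℂ] Gw)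
  tmul_spec : ∀ {m n : ℕ} (w u : Ω) (θ η : Gw), θ ∈ C.S.gr m → u ∈ S.gr n →
    tmul (w ⊗ₜ θ) (u ⊗ₜ η) = ((-1 : ℂ) ^ (m * n)) • ((w * u) ⊗ₜ (θ * η))
  td : (Ω ⊗[ℂ] Gw) →ₗ[ℂ] (Ω ⊗[ℂ] Gw)
  td_spec : ∀ {n : ℕ} (w : Ω) (θ : Gw), w ∈ S.gr n →
    td (w ⊗ₜ θ) = S.d w ⊗ₜ θ + ((-1 : ℂ) ^ n) • (w ⊗ₜ C.S.d θ)
  tconj : (Ω ⊗[ℂ] Gw) → (Ω ⊗[ℂ] Gw)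
  tconj_add : ∀ x y, tconj (x + y) = tconj x + tconj y
  tconj_spec : ∀ (w : Ω) (θ : Gw), tconj (w ⊗ₜ θ) = S.conj w ⊗ₜ C.S.conj θ
  Fh : Ω →ₗ[ℂ] Ω ⊗[ℂ] Gw
  Fh_one : Fh 1 = (1 : Ω) ⊗ₜ (1 : Gw)
  Fh_mul : ∀ x y, Fh (x * y) = tmul (Fh x) (Fh y)
  Fh_d : ∀ x, Fh (S.d x) = td (Fh x)
  Fh_grade : ∀ {n : ℕ} {x : Ω}, x ∈ S.gr n → ∀ i j : ℕ, i + j ≠ n →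
    (map (S.proj i) (C.S.proj j)) (Fh x) = 0
  Fh_extends : ∀ b, Fh (ιB b) = (map ιB.toLinearMap C.ι.toLinearMap) (P.F b)

section Standalone

variable {A : Type} [Ring A] [HopfAlgebra ℂ A] [StarRing A]
variable {Gw : Type} [Ring Gw] [Algebra ℂ Gw]
variable {Ω : Type} [Ring Ω] [Algebra ℂ Ω]
variable (C : GroupCalc A Gw)

/-- Multiplicativity of a connection: `ω π(a⁽¹⁾) ω π(a⁽²⁾) = 0` for all `a ∈ R`. -/
def IsMultiplicative (ω : ↥(C.Inv 1) →ₗ[ℂ] Ω) : Prop :=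
  ∀ a ∈ C.Rid, LinearMap.mul' ℂ Ω
    ((map (ω ∘ₗ C.πInv) (ω ∘ₗ C.πInv)) (Coalgebra.comul (R := ℂ) a)) = 0

/-- The map `r_ω(a) = ω π(a⁽¹⁾) ω π(a⁽²⁾)` measuring the lack of multiplicativity. -/
def rOmega (ω : ↥(C.Inv 1) →ₗ[ℂ] Ω) : A →ₗ[ℂ] Ω :=
  (LinearMap.mul' ℂ Ω) ∘ₗ (map (ω ∘ₗ C.πInv) (ω ∘ₗ C.πInv)) ∘ₗ (Coalgebra.comul (R := ℂ))

end Standalone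

namespace Calc

variable {A : Type} [Ring A] [HopfAlgebra ℂ A] [StarRing A]
variable {Gw : Type} [Ring Gw] [Algebra ℂ Gw]
variable {V B : Type} [Ring V] [Algebra ℂ V] [StarRing V] [Ring B] [Algebra ℂ B] [StarRing B]
variable {Ω : Type} [Ring Ω] [Algebra ℂ Ω]
variable {C : GroupCalc A Gw} {P : QPB A V B}
variable (O : Calc A Gw V B Ω C P)

/-- `F^∧ = (id ⊗ p₀)F̂`, with the degree-zero part identified with `A`. -/
def Fa : Ω →ₗ[ℂ] Ω ⊗[ℂ] A := (map LinearMap.id C.ιinv) ∘ₗ O.Fh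

/-- The graded *-subalgebra `hor(P) = F̂⁻¹(Ω(P) ⊗ A)` of horizontal forms. -/
def horSub : Submodule ℂ Ω :=
  LinearMap.ker (O.Fh - (map LinearMap.id (C.S.proj 0)) ∘ₗ O.Fh)

/-- `Ω(M) = {w : F̂ w = w ⊗ 1}`, differential forms on the base. -/
def OmegaM : Submodule ℂ Ω :=
  LinearMap.ker (O.Fh - (TensorProduct.mk ℂ Ω Gw).flip 1)

/-- The degree `k` part of the verticalization homomorphism `π_v`,
`π_v = (id ⊗ π_inv p_k) F̂` on `Ω^k(P)`. -/
def vertPart (k : ℕ) : Ω →ₗ[ℂ] Ω ⊗[ℂ] Gw :=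
  (map LinearMap.id (C.pInv ∘ₗ C.S.proj k)) ∘ₗ O.Fh

/-- A connection: a hermitian first-order linear map `ω : Γ_inv → Ω¹(P)` with
`F̂ ω(θ) = (ω ⊗ id) ϖ(θ) + 1 ⊗ θ`. -/
def IsConnection (ω : ↥(C.Inv 1) →ₗ[ℂ] Ω) : Prop :=
  (∀ θ, ω θ ∈ O.S.gr 1) ∧
  (∀ θ, ω (C.conjInv θ) = O.S.conj (ω θ)) ∧
  (∀ θ, O.Fh (ω θ) =
    (map LinearMap.id C.ι.toLinearMap) ((map ω LinearMap.id) (C.adjInv θ)) +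
      (1 : Ω) ⊗ₜ ((θ : Gw)))

/-- Regularity: `ω(θ)φ = (-1)^{∂φ} Σ_k φ_k ω(θ ∘ c_k)` for horizontal `φ`. -/
def IsRegular (ω : ↥(C.Inv 1) →ₗ[ℂ] Ω) : Prop :=
  ∀ (n : ℕ) (φ : Ω), φ ∈ O.horSub → φ ∈ O.S.gr n → ∀ θ : ↥(C.Inv 1),
    ω θ * φ = ((-1 : ℂ) ^ n) •
      (LinearMap.mul' ℂ Ω ((map LinearMap.id (ω ∘ₗ C.circInv θ)) (O.Fa φ)))

/-- The covariant derivative on horizontal forms of degree `n`: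
`D_ω(φ) = dφ - (-1)^{∂φ} Σ_k φ_k ω π(c_k)`. -/
def Dcov (ω : ↥(C.Inv 1) →ₗ[ℂ] Ω) (n : ℕ) : Ω →ₗ[ℂ] Ω :=
  O.S.d - ((-1 : ℂ) ^ n) •
    ((LinearMap.mul' ℂ Ω) ∘ₗ (map LinearMap.id (ω ∘ₗ C.πInv)) ∘ₗ O.Fa)

/-- A tensorial `k`-form: a linear map `Γ_inv → hor^k(P)` intertwining `ϖ` and `F^∧`. -/
def IsTensorial (k : ℕ) (f : ↥(C.Inv 1) →ₗ[ℂ] Ω) : Prop :=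
  (∀ θ, f θ ∈ O.horSub ∧ f θ ∈ O.S.gr k) ∧
  (∀ θ, O.Fh (f θ) = (map LinearMap.id C.ι.toLinearMap) ((map f LinearMap.id) (C.adjInv θ)))

/-- The left ideal `T(P)` of `Ω(P)` generated by `r_ω(R)`. -/
def TP (ω : ↥(C.Inv 1) →ₗ[ℂ] Ω) : Submodule ℂ Ω :=
  Submodule.span ℂ {x | ∃ w : Ω, ∃ a ∈ C.Rid, x = w * rOmega C ω a}

end Calc

section EmbDiff

variable {A : Type} [Ring A] [HopfAlgebra ℂ A] [StarRing A]
variable {Gw : Type} [Ring Gw] [Algebra ℂ Gw]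
variable (C : GroupCalc A Gw)

/-- The coaction `ϖ ⊗ ϖ` (with multiplied `A`-legs) on `Γ_inv ⊗ Γ_inv`. -/
def adjInv2 : (↥(C.Inv 1) ⊗[ℂ] ↥(C.Inv 1)) →ₗ[ℂ] (↥(C.Inv 1) ⊗[ℂ] ↥(C.Inv 1)) ⊗[ℂ] A :=
  (map LinearMap.id (LinearMap.mul' ℂ A)) ∘ₗ
    (tensorTensorTensorComm ℂ ↥(C.Inv 1) A ↥(C.Inv 1) A).toLinearMap ∘ₗ
    (map C.adjInv C.adjInv)

/-- An embedded differential `δ : Γ_inv → Γ_inv ⊗ Γ_inv`. -/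
def IsEmbDiff (δ : ↥(C.Inv 1) →ₗ[ℂ] ↥(C.Inv 1) ⊗[ℂ] ↥(C.Inv 1)) : Prop :=
  (∀ θ, adjInv2 C (δ θ) = (map δ LinearMap.id) (C.adjInv θ)) ∧
  (∀ θ, (LinearMap.mul' ℂ Gw) ((map (C.Inv 1).subtype (C.Inv 1).subtype) (δ θ)) =
    C.S.d (θ : Gw)) ∧
  (∀ θ, δ (C.conjInv θ) = - C.conjI2 (δ θ))

/-- The transposed commutator `c^⊤ = (id ⊗ π) ϖ`. -/
def cT : ↥(C.Inv 1) →ₗ[ℂ] ↥(C.Inv 1) ⊗[ℂ] ↥(C.Inv 1) :=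
  (map LinearMap.id C.πInv) ∘ₗ C.adjInv

end EmbDiff

section Brackets

variable {A : Type} [Ring A] [HopfAlgebra ℂ A] [StarRing A]
variable {Gw : Type} [Ring Gw] [Algebra ℂ Gw]
variable {Ω : Type} [Ring Ω] [Algebra ℂ Ω]
variable (C : GroupCalc A Gw)

/-- The bracket `⟨φ, η⟩ = m_Ω (φ ⊗ η) δ`. -/
def bra (δ : ↥(C.Inv 1) →ₗ[ℂ] ↥(C.Inv 1) ⊗[ℂ] ↥(C.Inv 1))
    (f g : ↥(C.Inv 1) →ₗ[ℂ] Ω) : ↥(C.Inv 1) →ₗ[ℂ] Ω :=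
  (LinearMap.mul' ℂ Ω) ∘ₗ (map f g) ∘ₗ δ

/-- The bracket `[φ, η] = m_Ω (φ ⊗ η) c^⊤`. -/
def com (f g : ↥(C.Inv 1) →ₗ[ℂ] Ω) : ↥(C.Inv 1) →ₗ[ℂ] Ω :=
  (LinearMap.mul' ℂ Ω) ∘ₗ (map f g) ∘ₗ cT C

/-- The curvature `R_ω = dω - ⟨ω, ω⟩` of a connection. -/
def Rcurv {V B : Type} [Ring V] [Algebra ℂ V] [StarRing V] [Ring B] [Algebra ℂ B] [StarRing B]
    {C' : GroupCalc A Gw} {P : QPB A V B} (O : Calc A Gw V B Ω C' P)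
    (δ : ↥(C'.Inv 1) →ₗ[ℂ] ↥(C'.Inv 1) ⊗[ℂ] ↥(C'.Inv 1))
    (ω : ↥(C'.Inv 1) →ₗ[ℂ] Ω) : ↥(C'.Inv 1) →ₗ[ℂ] Ω :=
  O.S.d ∘ₗ ω - bra C' δ ω ω

end Brackets


section AuxGeneric

open DirectSum

namespace GrStarAlg

variable {X : Type} [Ring X] [Algebra ℂ X]

lemma proj_proj (G : GrStarAlg X) (a b : ℕ) (x : X) :
    G.proj a (G.proj b x) = if a = b then G.proj b x else 0 := by
  by_cases h : a = b
  · subst h; rw [if_pos rfl]; exact G.proj_of_mem (G.proj_mem _ x)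
  · rw [if_neg h]; exact G.proj_of_ne (G.proj_mem b x) h

lemma proj_comp (G : GrStarAlg X) (a b : ℕ) :
    G.proj a ∘ₗ G.proj b = if a = b then G.proj b else 0 := by
  by_cases h : a = b <;> ext x <;> simp [proj_proj, h]

lemma decomp_le (G : GrStarAlg X) {x : X} {N M : ℕ} (hNM : N ≤ M)
    (h : x = ∑ i ∈ Finset.range N, G.proj i x) :
    x = ∑ i ∈ Finset.range M, G.proj i x := by
  have hz : ∀ a, N ≤ a → G.proj a x = 0 := by
    intro a ha
    conv_lhs => rw [h]
    rw [map_sum]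
    refine Finset.sum_eq_zero fun i hi => ?_
    rw [Finset.mem_range] at hi
    rw [G.proj_proj, if_neg (by omega)]
  rw [← Finset.sum_subset (Finset.range_subset_range.2 hNM)
    (fun i _ hiN => hz i (by simpa using hiN))]
  exact h

lemma exists_decomp (G : GrStarAlg X) (x : X) :
    ∃ N, x = ∑ i ∈ Finset.range N, G.proj i x := by
  have hx : x ∈ ⨆ n, G.gr n := by
    rw [G.direct.submodule_iSup_eq_top]; trivial
  refine Submodule.iSup_induction (motive := fun y => ∃ N, y = ∑ i ∈ Finset.range N, G.proj i y)
    G.gr hx ?_ ⟨0, by simp⟩ ?_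
  · intro n y hy
    refine ⟨n + 1, ?_⟩
    rw [Finset.sum_eq_single_of_mem n (Finset.mem_range.2 (Nat.lt_succ_self n))]
    · exact (G.proj_of_mem hy).symm
    · intro i _ hin; exact G.proj_of_ne hy hin
  · rintro y z ⟨N, hN⟩ ⟨M, hM⟩
    refine ⟨max N M, ?_⟩
    have hy := G.decomp_le (le_max_left N M) hN
    have hz := G.decomp_le (le_max_right N M) hM
    conv_lhs => rw [hy, hz]
    rw [← Finset.sum_add_distrib]
    simp [map_add]

lemma homog_induction (G : GrStarAlg X) {Q : X → Prop} (h0 : Q 0)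
    (hadd : ∀ x y, Q x → Q y → Q (x + y))
    (hhom : ∀ (n : ℕ) (x : X), x ∈ G.gr n → Q x) (x : X) : Q x := by
  obtain ⟨N, hN⟩ := G.exists_decomp x
  rw [hN]
  exact Finset.sum_induction _ Q hadd h0 (fun i _ => hhom i _ (G.proj_mem i x))

/-- The canonical linear equivalence coming from the internal grading. -/
noncomputable def dec (G : GrStarAlg X) : (⨁ n, ↥(G.gr n)) ≃ₗ[ℂ] X :=
  LinearEquiv.ofBijective (DirectSum.coeLinearMap G.gr) G.direct

lemma dec_symm_homog (G : GrStarAlg X) {n : ℕ} {x : X} (hx : x ∈ G.gr n) :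
    G.dec.symm x = DirectSum.lof ℂ ℕ (fun i => ↥(G.gr i)) n ⟨x, hx⟩ := by
  rw [LinearEquiv.symm_apply_eq]
  show x = DirectSum.coeLinearMap G.gr (DirectSum.lof ℂ ℕ (fun i => ↥(G.gr i)) n ⟨x, hx⟩)
  rw [DirectSum.lof_eq_of, DirectSum.coeLinearMap_of]

/-- The sign operator `x ↦ (-1)^{∂x} x`. -/
noncomputable def sgn (G : GrStarAlg X) : X →ₗ[ℂ] X :=
  (DirectSum.toModule ℂ ℕ X fun n => ((-1 : ℂ) ^ n) • (G.gr n).subtype) ∘ₗ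
    G.dec.symm.toLinearMap

lemma sgn_homog (G : GrStarAlg X) {n : ℕ} {x : X} (hx : x ∈ G.gr n) :
    G.sgn x = ((-1 : ℂ) ^ n) • x := by
  rw [sgn, LinearMap.comp_apply, LinearEquiv.coe_toLinearMap, G.dec_symm_homog hx,
    DirectSum.toModule_lof]
  rfl

/-- The graded braiding `ζ ⊗ q ↦ f^{∂ζ}(q) ⊗ ζ`. -/
noncomputable def braid (G : GrStarAlg X) (Ma : Type) [AddCommGroup Ma] [Module ℂ Ma]
    (f : ℕ → Ma →ₗ[ℂ] Ma) : X ⊗[ℂ] Ma →ₗ[ℂ] Ma ⊗[ℂ] X :=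
  (DirectSum.toModule ℂ ℕ (Ma ⊗[ℂ] X) fun n =>
      (TensorProduct.map (f n) (G.gr n).subtype) ∘ₗ
        (TensorProduct.comm ℂ ↥(G.gr n) Ma).toLinearMap) ∘ₗ
    (TensorProduct.directSumLeft ℂ ℂ (fun n => ↥(G.gr n)) Ma).toLinearMap ∘ₗ
    (TensorProduct.map G.dec.symm.toLinearMap LinearMap.id)

lemma braid_tmul (G : GrStarAlg X) (Ma : Type) [AddCommGroup Ma] [Module ℂ Ma]
    (f : ℕ → Ma →ₗ[ℂ] Ma) {n : ℕ} {ζ : X} (hζ : ζ ∈ G.gr n) (q : Ma) :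
    G.braid Ma f (ζ ⊗ₜ q) = (f n q) ⊗ₜ ζ := by
  rw [braid]
  simp only [LinearMap.comp_apply, TensorProduct.map_tmul, LinearMap.id_apply,
    LinearEquiv.coe_coe, LinearEquiv.coe_toLinearMap]
  rw [G.dec_symm_homog hζ, TensorProduct.directSumLeft_tmul_lof, DirectSum.toModule_lof]
  rfl

end GrStarAlg

end AuxGeneric
section AuxGeneric2

open TensorProduct

variable {X Y : Type} [Ring X] [Algebra ℂ X] [Ring Y] [Algebra ℂ Y]
variable (G₁ : GrStarAlg X) (G₂ : GrStarAlg Y)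

lemma map_smul_smul {X' Y' : Type} [AddCommGroup X'] [Module ℂ X'] [AddCommGroup Y'] [Module ℂ Y']
    (f : X →ₗ[ℂ] X') (g : Y →ₗ[ℂ] Y') (c c' : ℂ) :
    map (c • f) (c' • g) = (c * c') • map f g := by
  apply TensorProduct.ext'
  intro x y
  simp only [LinearMap.smul_apply, TensorProduct.map_tmul]
  rw [TensorProduct.tmul_smul, ← TensorProduct.smul_tmul', smul_smul, mul_comm c' c]

lemma map_proj_proj (a b i j : ℕ) :
    (map (G₁.proj a) (G₂.proj b)) ∘ₗ (map (G₁.proj i) (G₂.proj j)) =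
      if a = i ∧ b = j then map (G₁.proj i) (G₂.proj j) else 0 := by
  rw [← TensorProduct.map_comp, G₁.proj_comp, G₂.proj_comp]
  by_cases h1 : a = i
  · by_cases h2 : b = j
    · rw [if_pos h1, if_pos h2, if_pos ⟨h1, h2⟩]
    · rw [if_pos h1, if_neg h2, if_neg (show ¬(a = i ∧ b = j) by tauto)]
      apply TensorProduct.ext'; intro x y; simp
  · rw [if_neg h1, if_neg (show ¬(a = i ∧ b = j) by tauto)]
    apply TensorProduct.ext'; intro x y; simp

lemma map_proj_proj_apply (a b i j : ℕ) (p : X ⊗[ℂ] Y) :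
    (map (G₁.proj a) (G₂.proj b)) ((map (G₁.proj i) (G₂.proj j)) p) =
      if a = i ∧ b = j then (map (G₁.proj i) (G₂.proj j)) p else 0 := by
  have := congrArg (fun φ => φ p) (map_proj_proj G₁ G₂ a b i j)
  simp only [LinearMap.comp_apply] at this
  rw [this]
  by_cases h : a = i ∧ b = j <;> simp [h]

lemma bidecomp_le {p : X ⊗[ℂ] Y} {N M : ℕ} (hNM : N ≤ M)
    (h : p = ∑ ij ∈ Finset.range N ×ˢ Finset.range N,
      (map (G₁.proj ij.1) (G₂.proj ij.2)) p) :
    p = ∑ ij ∈ Finset.range M ×ˢ Finset.range M,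
      (map (G₁.proj ij.1) (G₂.proj ij.2)) p := by
  have hz : ∀ a b : ℕ, N ≤ a ∨ N ≤ b → (map (G₁.proj a) (G₂.proj b)) p = 0 := by
    intro a b hab
    conv_lhs => rw [h]
    rw [map_sum]
    refine Finset.sum_eq_zero fun ij hij => ?_
    simp only [Finset.mem_product, Finset.mem_range] at hij
    rw [map_proj_proj_apply, if_neg (by omega)]
  rw [← Finset.sum_subset (Finset.product_subset_product
      (Finset.range_subset_range.2 hNM) (Finset.range_subset_range.2 hNM)) ?_]
  · exact h
  · intro ij _ hij
    simp only [Finset.mem_product, Finset.mem_range] at hij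
    exact hz ij.1 ij.2 (by omega)

lemma bidecomp (p : X ⊗[ℂ] Y) :
    ∃ N, p = ∑ ij ∈ Finset.range N ×ˢ Finset.range N,
      (map (G₁.proj ij.1) (G₂.proj ij.2)) p := by
  induction p using TensorProduct.induction_on with
  | zero => exact ⟨0, by simp⟩
  | tmul w θ =>
    obtain ⟨N₁, h₁⟩ := G₁.exists_decomp w
    obtain ⟨N₂, h₂⟩ := G₂.exists_decomp θ
    refine ⟨max N₁ N₂, ?_⟩
    have h₁' := G₁.decomp_le (le_max_left N₁ N₂) h₁
    have h₂' := G₂.decomp_le (le_max_right N₁ N₂) h₂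
    calc w ⊗ₜ[ℂ] θ
        = (∑ i ∈ Finset.range (max N₁ N₂), G₁.proj i w) ⊗ₜ[ℂ]
            (∑ j ∈ Finset.range (max N₁ N₂), G₂.proj j θ) := by rw [← h₁', ← h₂']
      _ = ∑ ij ∈ Finset.range (max N₁ N₂) ×ˢ Finset.range (max N₁ N₂),
            (map (G₁.proj ij.1) (G₂.proj ij.2)) (w ⊗ₜ[ℂ] θ) := by
          rw [TensorProduct.sum_tmul, Finset.sum_product]
          simp [TensorProduct.tmul_sum]
  | add p q hp hq =>
    obtain ⟨N₁, h₁⟩ := hp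
    obtain ⟨N₂, h₂⟩ := hq
    refine ⟨max N₁ N₂, ?_⟩
    have h₁' := bidecomp_le G₁ G₂ (le_max_left N₁ N₂) h₁
    have h₂' := bidecomp_le G₁ G₂ (le_max_right N₁ N₂) h₂
    conv_lhs => rw [h₁', h₂']
    rw [← Finset.sum_add_distrib]
    simp [map_add]

lemma homog2_induction {Q : X ⊗[ℂ] Y → Prop} (h0 : Q 0)
    (hadd : ∀ p q, Q p → Q q → Q (p + q))
    (hs : ∀ (a b : ℕ) (w : X) (θ : Y), w ∈ G₁.gr a → θ ∈ G₂.gr b → Q (w ⊗ₜ θ))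
    (p : X ⊗[ℂ] Y) : Q p := by
  induction p using TensorProduct.induction_on with
  | zero => exact h0
  | tmul w θ =>
    obtain ⟨N₁, h₁⟩ := G₁.exists_decomp w
    obtain ⟨N₂, h₂⟩ := G₂.exists_decomp θ
    rw [h₁, TensorProduct.sum_tmul]
    refine Finset.sum_induction _ Q hadd h0 (fun i _ => ?_)
    rw [h₂, TensorProduct.tmul_sum]
    refine Finset.sum_induction _ Q hadd h0 (fun j _ => ?_)
    exact hs i j _ _ (G₁.proj_mem i w) (G₂.proj_mem j θ)
  | add p q hp hq => exact hadd p q hp hq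

lemma sgn_comp_proj (G : GrStarAlg X) (i : ℕ) :
    G.sgn ∘ₗ G.proj i = ((-1 : ℂ) ^ i) • G.proj i := by
  ext x
  simp [G.sgn_homog (G.proj_mem i x)]

lemma sgn2_pure {n : ℕ} {p : X ⊗[ℂ] Y}
    (hp : ∀ i j : ℕ, i + j ≠ n → (map (G₁.proj i) (G₂.proj j)) p = 0) :
    (map G₁.sgn G₂.sgn) p = ((-1 : ℂ) ^ n) • p := by
  obtain ⟨N, hN⟩ := bidecomp G₁ G₂ p
  conv_lhs => rw [hN]
  conv_rhs => rw [hN]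
  rw [map_sum, Finset.smul_sum]
  refine Finset.sum_congr rfl fun ij _ => ?_
  by_cases hij : ij.1 + ij.2 = n
  · have : (map G₁.sgn G₂.sgn) ∘ₗ (map (G₁.proj ij.1) (G₂.proj ij.2)) =
        ((-1 : ℂ) ^ n) • map (G₁.proj ij.1) (G₂.proj ij.2) := by
      rw [← TensorProduct.map_comp, sgn_comp_proj, sgn_comp_proj, map_smul_smul,
        ← pow_add, hij]
    have := congrArg (fun φ => φ p) this
    simpa using this
  · rw [hp ij.1 ij.2 hij]
    simp

lemma pure_induction {b : ℕ} {Q : X ⊗[ℂ] Y → Prop} (h0 : Q 0)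
    (hadd : ∀ p q, Q p → Q q → Q (p + q))
    (hs : ∀ m k, m + k = b → ∀ (w : X) (θ : Y), w ∈ G₁.gr m → θ ∈ G₂.gr k → Q (w ⊗ₜ θ))
    {q : X ⊗[ℂ] Y} (hq : ∀ i j : ℕ, i + j ≠ b → (map (G₁.proj i) (G₂.proj j)) q = 0) :
    Q q := by
  obtain ⟨N, hN⟩ := bidecomp G₁ G₂ q
  rw [hN]
  refine Finset.sum_induction _ Q hadd h0 (fun ij _ => ?_)
  by_cases hij : ij.1 + ij.2 = b
  · clear hN hq
    induction q using TensorProduct.induction_on with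
    | zero => simpa using h0
    | tmul w θ =>
      rw [TensorProduct.map_tmul]
      exact hs ij.1 ij.2 hij _ _ (G₁.proj_mem _ w) (G₂.proj_mem _ θ)
    | add p' q' hp' hq' => rw [map_add]; exact hadd _ _ hp' hq'
  · rw [hq _ _ hij]
    exact h0

lemma neg_one_pow_congr' {a b : ℕ} (h : a % 2 = b % 2) : (-1 : ℂ) ^ a = (-1 : ℂ) ^ b := by
  rcases Nat.even_or_odd a with ha | ha
  · rw [ha.neg_one_pow, (Nat.even_iff.2 (by rw [← h]; exact Nat.even_iff.1 ha)).neg_one_pow]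
  · rw [ha.neg_one_pow, (Nat.odd_iff.2 (by rw [← h]; exact Nat.odd_iff.1 ha)).neg_one_pow]

end AuxGeneric2
namespace St2

open TensorProduct

lemma pow_eig {M : Type} [AddCommGroup M] [Module ℂ M] (f : M →ₗ[ℂ] M) (c : ℂ) (x : M)
    (h : f x = c • x) (k : ℕ) : (f ^ k) x = c ^ k • x := by
  induction k with
  | zero => simp
  | succ n ih =>
    rw [pow_succ, Module.End.mul_apply, h, map_smul, ih, smul_smul, pow_succ]
    ring_nf

variable {A : Type} [Ring A] [HopfAlgebra ℂ A] [StarRing A]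
variable {Gw : Type} [Ring Gw] [Algebra ℂ Gw]
variable {V B : Type} [Ring V] [Algebra ℂ V] [StarRing V] [Ring B] [Algebra ℂ B] [StarRing B]
variable {Ω : Type} [Ring Ω] [Algebra ℂ Ω]
variable {C : GroupCalc A Gw} {P : QPB A V B}
variable (O : Calc A Gw V B Ω C P)

/-- The total sign operator on `Ω(P) ⊗ Γ^∧`. -/
noncomputable def sM : (Ω ⊗[ℂ] Gw) →ₗ[ℂ] (Ω ⊗[ℂ] Gw) :=
  map O.S.toGrStarAlg.sgn C.S.toGrStarAlg.sgn

lemma sM_tmul {a b : ℕ} {w : Ω} {θ : Gw} (hw : w ∈ O.S.gr a) (hθ : θ ∈ C.S.gr b) :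
    sM O (w ⊗ₜ θ) = ((-1 : ℂ) ^ (a + b)) • (w ⊗ₜ θ) := by
  rw [sM, TensorProduct.map_tmul, O.S.toGrStarAlg.sgn_homog hw, C.S.toGrStarAlg.sgn_homog hθ,
    TensorProduct.tmul_smul, ← TensorProduct.smul_tmul', smul_smul, ← pow_add, Nat.add_comm b a]

lemma sM_pure {a : ℕ} {w : Ω} (hw : w ∈ O.S.gr a) :
    sM O (O.Fh w) = ((-1 : ℂ) ^ a) • O.Fh w :=
  sgn2_pure O.S.toGrStarAlg C.S.toGrStarAlg (O.Fh_grade hw)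

lemma sM_pow_Fh {a : ℕ} {w : Ω} (hw : w ∈ O.S.gr a) (k : ℕ) :
    ((sM O) ^ k) (O.Fh w) = ((-1 : ℂ) ^ (k * a)) • O.Fh w := by
  rw [pow_eig _ _ _ (sM_pure O hw) k, ← pow_mul, Nat.mul_comm]

lemma sM_pow_tmul {a b : ℕ} {w : Ω} {θ : Gw} (hw : w ∈ O.S.gr a) (hθ : θ ∈ C.S.gr b)
    (k : ℕ) : ((sM O) ^ k) (w ⊗ₜ θ) = ((-1 : ℂ) ^ (k * (a + b))) • (w ⊗ₜ θ) := by
  rw [pow_eig _ _ _ (sM_tmul O hw hθ) k, ← pow_mul, Nat.mul_comm]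

/-- The graded braiding `Γ^∧ ⊗ (Ω(P) ⊗ Γ^∧) → (Ω(P) ⊗ Γ^∧) ⊗ Γ^∧`. -/
noncomputable def kap : Gw ⊗[ℂ] (Ω ⊗[ℂ] Gw) →ₗ[ℂ] (Ω ⊗[ℂ] Gw) ⊗[ℂ] Gw :=
  C.S.toGrStarAlg.braid (Ω ⊗[ℂ] Gw) (fun n => (sM O) ^ n)

lemma kap_tmul {n : ℕ} {ζ : Gw} (hζ : ζ ∈ C.S.gr n) (q : Ω ⊗[ℂ] Gw) :
    kap O (ζ ⊗ₜ q) = (((sM O) ^ n) q) ⊗ₜ ζ :=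
  C.S.toGrStarAlg.braid_tmul _ _ hζ q

/-- The product of the graded-differential algebra `Ω(P) ⊗̂ Γ^∧ ⊗̂ Γ^∧`. -/
noncomputable def M3 : ((Ω ⊗[ℂ] Gw) ⊗[ℂ] Gw) →ₗ[ℂ] ((Ω ⊗[ℂ] Gw) ⊗[ℂ] Gw) →ₗ[ℂ]
    ((Ω ⊗[ℂ] Gw) ⊗[ℂ] Gw) :=
  TensorProduct.curry
    ((map (TensorProduct.lift O.tmul) (LinearMap.mul' ℂ Gw)) ∘ₗ
      (TensorProduct.assoc ℂ (Ω ⊗[ℂ] Gw) (Ω ⊗[ℂ] Gw) (Gw ⊗[ℂ] Gw)).symm.toLinearMap ∘ₗ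
      (map LinearMap.id (TensorProduct.assoc ℂ (Ω ⊗[ℂ] Gw) Gw Gw).toLinearMap) ∘ₗ
      (map LinearMap.id ((map (kap O) LinearMap.id) ∘ₗ
        (TensorProduct.assoc ℂ Gw (Ω ⊗[ℂ] Gw) Gw).symm.toLinearMap)) ∘ₗ
      (TensorProduct.assoc ℂ (Ω ⊗[ℂ] Gw) Gw ((Ω ⊗[ℂ] Gw) ⊗[ℂ] Gw)).toLinearMap)

lemma M3_eval {n : ℕ} {ζ : Gw} (hζ : ζ ∈ C.S.gr n) (p q : Ω ⊗[ℂ] Gw) (ξ : Gw) :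
    M3 O (p ⊗ₜ ζ) (q ⊗ₜ ξ) = (O.tmul p (((sM O) ^ n) q)) ⊗ₜ (ζ * ξ) := by
  rw [M3, TensorProduct.curry_apply]
  simp only [LinearMap.comp_apply, LinearEquiv.coe_toLinearMap, TensorProduct.assoc_tmul,
    TensorProduct.map_tmul, LinearMap.id_apply, TensorProduct.assoc_symm_tmul,
    kap_tmul O hζ, TensorProduct.lift.tmul, LinearMap.mul'_apply]

/-- The differential of the graded-differential algebra `Ω(P) ⊗̂ Γ^∧ ⊗̂ Γ^∧`. -/
noncomputable def D3 : ((Ω ⊗[ℂ] Gw) ⊗[ℂ] Gw) →ₗ[ℂ] ((Ω ⊗[ℂ] Gw) ⊗[ℂ] Gw) :=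
  map O.td LinearMap.id + map (sM O) C.S.d

end St2
namespace St2

open TensorProduct

variable {A : Type} [Ring A] [HopfAlgebra ℂ A] [StarRing A]
variable {Gw : Type} [Ring Gw] [Algebra ℂ Gw]
variable {V B : Type} [Ring V] [Algebra ℂ V] [StarRing V] [Ring B] [Algebra ℂ B] [StarRing B]
variable {Ω : Type} [Ring Ω] [Algebra ℂ Ω]
variable {C : GroupCalc A Gw} {P : QPB A V B}
variable (O : Calc A Gw V B Ω C P)

/-- The associator, as a linear map. -/
noncomputable def asm : Ω ⊗[ℂ] (Gw ⊗[ℂ] Gw) →ₗ[ℂ] (Ω ⊗[ℂ] Gw) ⊗[ℂ] Gw :=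
  (TensorProduct.assoc ℂ Ω Gw Gw).symm.toLinearMap

lemma asm_tmul (w : Ω) (ζ ξ : Gw) :
    asm (Ω := Ω) (Gw := Gw) (w ⊗ₜ (ζ ⊗ₜ ξ)) = (w ⊗ₜ ζ) ⊗ₜ ξ :=
  TensorProduct.assoc_symm_tmul w ζ ξ

lemma K1 (p : Ω ⊗[ℂ] Gw) :
    (map O.Fh LinearMap.id) (O.td p) = D3 O ((map O.Fh LinearMap.id) p) := by
  induction p using homog2_induction O.S.toGrStarAlg C.S.toGrStarAlg with
  | h0 => simp only [map_zero]
  | hadd p q hp hq => simp only [map_add, hp, hq]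
  | hs a b w θ hw hθ =>
    rw [O.td_spec w θ hw, map_add, map_smul]
    simp only [TensorProduct.map_tmul, LinearMap.id_apply, O.Fh_d, D3, LinearMap.add_apply,
      sM_pure O hw]
    rw [TensorProduct.smul_tmul']

lemma K2aux {a : ℕ} {w : Ω} (hw : w ∈ O.S.gr a) (q : Gw ⊗[ℂ] Gw) :
    asm ((O.S.d w) ⊗ₜ q) + ((-1 : ℂ) ^ a) • asm (w ⊗ₜ (C.tdG q)) =
    D3 O (asm (w ⊗ₜ q)) := by
  induction q using homog2_induction C.S.toGrStarAlg C.S.toGrStarAlg with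
  | h0 => simp only [TensorProduct.tmul_zero, map_zero, smul_zero, add_zero]
  | hadd p q hp hq =>
    simp only [TensorProduct.tmul_add, map_add, smul_add]
    rw [← hp, ← hq]
    abel
  | hs m k ζ ξ hζ hξ =>
    rw [C.tdG_spec ζ ξ hζ, TensorProduct.tmul_add, TensorProduct.tmul_smul, map_add, map_smul,
      asm_tmul, asm_tmul, asm_tmul, asm_tmul, D3, LinearMap.add_apply,
      TensorProduct.map_tmul, TensorProduct.map_tmul, O.td_spec w ζ hw,
      sM_tmul O hw hζ, LinearMap.id_apply, TensorProduct.add_tmul]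
    simp only [TensorProduct.smul_tmul', TensorProduct.tmul_smul, smul_smul, ← pow_add, smul_add]
    abel

lemma K2 (p : Ω ⊗[ℂ] Gw) :
    asm ((map LinearMap.id C.hatφ) (O.td p)) =
      D3 O (asm ((map LinearMap.id C.hatφ) p)) := by
  induction p using homog2_induction O.S.toGrStarAlg C.S.toGrStarAlg with
  | h0 => simp only [map_zero]
  | hadd p q hp hq =>
    simp only [map_add, hp, hq]
  | hs a b w θ hw hθ =>
    rw [O.td_spec w θ hw, map_add, map_smul, map_add, map_smul]
    simp only [TensorProduct.map_tmul, LinearMap.id_apply, C.hatφ_d]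
    exact K2aux O hw (C.hatφ θ)

end St2
namespace St2

open TensorProduct

variable {A : Type} [Ring A] [HopfAlgebra ℂ A] [StarRing A]
variable {Gw : Type} [Ring Gw] [Algebra ℂ Gw]

/-- The submodule of elements whose homogeneous components are sent by `hatφ`
into the corresponding total-degree component. -/
noncomputable def W3 (C : GroupCalc A Gw) : Submodule ℂ Gw :=
  ⨅ (n : ℕ), ⨅ (i : ℕ), ⨅ (j : ℕ), ⨅ (_ : i + j ≠ n),
    LinearMap.ker ((map (C.S.proj i) (C.S.proj j)) ∘ₗ C.hatφ ∘ₗ C.S.proj n)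

lemma mem_W3 {C : GroupCalc A Gw} {x : Gw} :
    x ∈ W3 C ↔ ∀ n i j : ℕ, i + j ≠ n →
      (map (C.S.proj i) (C.S.proj j)) (C.hatφ (C.S.proj n x)) = 0 := by
  simp [W3, Submodule.mem_iInf, LinearMap.mem_ker]

variable {C : GroupCalc A Gw}

lemma tmulG_pure {a b : ℕ} {q q' : Gw ⊗[ℂ] Gw}
    (hq : ∀ i j : ℕ, i + j ≠ a → (map (C.S.proj i) (C.S.proj j)) q = 0)
    (hq' : ∀ i j : ℕ, i + j ≠ b → (map (C.S.proj i) (C.S.proj j)) q' = 0)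
    {i j : ℕ} (hij : i + j ≠ a + b) :
    (map (C.S.proj i) (C.S.proj j)) (C.tmulG q q') = 0 := by
  refine pure_induction C.S.toGrStarAlg C.S.toGrStarAlg (b := a)
    (Q := fun q => (map (C.S.proj i) (C.S.proj j)) (C.tmulG q q') = 0) ?_ ?_ ?_ hq
  · simp only [map_zero, LinearMap.zero_apply]
  · intro p₁ p₂ h₁ h₂
    rw [map_add, LinearMap.add_apply, map_add, h₁, h₂, add_zero]
  · intro m k hmk ζ ξ hζ hξ
    refine pure_induction C.S.toGrStarAlg C.S.toGrStarAlg (b := b)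
      (Q := fun q' => (map (C.S.proj i) (C.S.proj j)) (C.tmulG (ζ ⊗ₜ ξ) q') = 0) ?_ ?_ ?_ hq'
    · simp only [map_zero]
    · intro p₁ p₂ h₁ h₂
      rw [map_add, map_add, h₁, h₂, add_zero]
    · intro r s hrs ζ' ξ' hζ' hξ'
      rw [C.tmulG_spec ζ ζ' ξ ξ' hξ hζ', map_smul, TensorProduct.map_tmul]
      by_cases hi : i = m + r
      · have hj : j ≠ k + s := by omega
        rw [C.S.proj_of_ne (C.S.mul_mem hξ hξ') hj, TensorProduct.tmul_zero, smul_zero]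
      · rw [C.S.proj_of_ne (C.S.mul_mem hζ hζ') hi, TensorProduct.zero_tmul, smul_zero]

lemma tdG_pure {a : ℕ} {q : Gw ⊗[ℂ] Gw}
    (hq : ∀ i j : ℕ, i + j ≠ a → (map (C.S.proj i) (C.S.proj j)) q = 0)
    {i j : ℕ} (hij : i + j ≠ a + 1) :
    (map (C.S.proj i) (C.S.proj j)) (C.tdG q) = 0 := by
  refine pure_induction C.S.toGrStarAlg C.S.toGrStarAlg (b := a)
    (Q := fun q => (map (C.S.proj i) (C.S.proj j)) (C.tdG q) = 0) ?_ ?_ ?_ hq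
  · simp only [map_zero]
  · intro p₁ p₂ h₁ h₂
    rw [map_add, map_add, h₁, h₂, add_zero]
  · intro m k hmk ζ ξ hζ hξ
    rw [C.tdG_spec ζ ξ hζ, map_add, map_smul, TensorProduct.map_tmul, TensorProduct.map_tmul]
    have h1 : (C.S.proj i) (C.S.d ζ) ⊗ₜ[ℂ] (C.S.proj j) ξ = 0 := by
      by_cases hi : i = m + 1
      · rw [C.S.proj_of_ne hξ (show j ≠ k by omega), TensorProduct.tmul_zero]
      · rw [C.S.proj_of_ne (C.S.d_mem hζ) hi, TensorProduct.zero_tmul]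
    have h2 : (C.S.proj i) ζ ⊗ₜ[ℂ] (C.S.proj j) (C.S.d ξ) = 0 := by
      by_cases hi : i = m
      · rw [C.S.proj_of_ne (C.S.d_mem hξ) (show j ≠ k + 1 by omega), TensorProduct.tmul_zero]
      · rw [C.S.proj_of_ne hζ hi, TensorProduct.zero_tmul]
    rw [h1, h2, smul_zero, add_zero]

lemma homog_mem_W3 {a : ℕ} {θ : Gw} (hθ : θ ∈ C.S.gr a)
    (hp : ∀ i j : ℕ, i + j ≠ a → (map (C.S.proj i) (C.S.proj j)) (C.hatφ θ) = 0) :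
    θ ∈ W3 C := by
  rw [mem_W3]
  intro n i j hij
  by_cases hn : n = a
  · subst hn
    rw [C.S.proj_of_mem hθ]
    exact hp i j hij
  · rw [C.S.proj_of_ne hθ hn, map_zero, map_zero]

lemma W3_eq_top : ∀ x : Gw, x ∈ W3 C := by
  refine C.generated (W3 C) ?_ ?_ ?_
  · -- generators
    intro a
    refine homog_mem_W3 (C.ι_mem a) ?_
    intro i j hij
    rw [C.hatφ_ι]
    have : (map (C.S.proj i) (C.S.proj j)) ∘ₗ (map C.ι.toLinearMap C.ι.toLinearMap) =
        map ((C.S.proj i) ∘ₗ C.ι.toLinearMap) ((C.S.proj j) ∘ₗ C.ι.toLinearMap) :=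
      (TensorProduct.map_comp _ _ _ _).symm
    have happ := congrArg (fun φ => φ (Coalgebra.comul (R := ℂ) a)) this
    simp only [LinearMap.comp_apply] at happ
    rw [happ]
    rcases (show i ≠ 0 ∨ j ≠ 0 by omega) with hi | hj
    · have hz : (C.S.proj i) ∘ₗ C.ι.toLinearMap = 0 := by
        ext b; exact C.S.proj_of_ne (C.ι_mem b) hi
      rw [hz, TensorProduct.map_zero_left, LinearMap.zero_apply]
    · have hz : (C.S.proj j) ∘ₗ C.ι.toLinearMap = 0 := by
        ext b; exact C.S.proj_of_ne (C.ι_mem b) hj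
      rw [hz, TensorProduct.map_zero_right, LinearMap.zero_apply]
  · -- multiplicative closure
    intro x y hx hy
    obtain ⟨N, hN⟩ := C.S.toGrStarAlg.exists_decomp x
    obtain ⟨M, hM⟩ := C.S.toGrStarAlg.exists_decomp y
    rw [hN, hM, Finset.sum_mul_sum]
    refine Submodule.sum_mem _ fun a _ => Submodule.sum_mem _ fun b _ => ?_
    refine homog_mem_W3 (C.S.mul_mem (C.S.proj_mem a x) (C.S.proj_mem b y)) ?_
    intro i j hij
    rw [C.hatφ_mul]
    refine tmulG_pure ?_ ?_ hij
    · intro i' j' h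
      exact (mem_W3.1 hx) a i' j' h
    · intro i' j' h
      exact (mem_W3.1 hy) b i' j' h
  · -- closure under the differential
    intro x hx
    obtain ⟨N, hN⟩ := C.S.toGrStarAlg.exists_decomp x
    rw [hN, map_sum]
    refine Submodule.sum_mem _ fun a _ => ?_
    refine homog_mem_W3 (C.S.d_mem (C.S.proj_mem a x)) ?_
    intro i j hij
    rw [C.hatφ_d]
    refine tdG_pure ?_ hij
    intro i' j' h
    exact (mem_W3.1 hx) a i' j' h

/-- `φ̂` preserves total degree. -/
lemma hatφ_grade {b : ℕ} {θ : Gw} (hθ : θ ∈ C.S.gr b) {i j : ℕ} (hij : i + j ≠ b) :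
    (map (C.S.proj i) (C.S.proj j)) (C.hatφ θ) = 0 := by
  have h := (mem_W3.1 (W3_eq_top (C := C) θ)) b i j hij
  rwa [C.S.proj_of_mem hθ] at h

end St2
namespace St2

open TensorProduct

variable {A : Type} [Ring A] [HopfAlgebra ℂ A] [StarRing A]
variable {Gw : Type} [Ring Gw] [Algebra ℂ Gw]
variable {V B : Type} [Ring V] [Algebra ℂ V] [StarRing V] [Ring B] [Algebra ℂ B] [StarRing B]
variable {Ω : Type} [Ring Ω] [Algebra ℂ Ω]
variable {C : GroupCalc A Gw} {P : QPB A V B}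
variable (O : Calc A Gw V B Ω C P)

lemma K3 (p q : Ω ⊗[ℂ] Gw) :
    (map O.Fh LinearMap.id) (O.tmul p q) =
      M3 O ((map O.Fh LinearMap.id) p) ((map O.Fh LinearMap.id) q) := by
  induction p using homog2_induction O.S.toGrStarAlg C.S.toGrStarAlg with
  | h0 => simp only [map_zero, LinearMap.zero_apply, LinearMap.map_zero]
  | hadd p₁ p₂ h₁ h₂ => simp only [map_add, LinearMap.add_apply, h₁, h₂]
  | hs a b w θ hw hθ =>
    induction q using homog2_induction O.S.toGrStarAlg C.S.toGrStarAlg with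
    | h0 => simp only [map_zero, LinearMap.map_zero]
    | hadd q₁ q₂ h₁ h₂ => simp only [map_add, h₁, h₂]
    | hs c d u η hu hη =>
      rw [O.tmul_spec w u θ η hθ hu, map_smul, TensorProduct.map_tmul, TensorProduct.map_tmul,
        TensorProduct.map_tmul, LinearMap.id_apply, LinearMap.id_apply, LinearMap.id_apply,
        O.Fh_mul, M3_eval O hθ, sM_pow_Fh O hu b, map_smul, TensorProduct.smul_tmul']

lemma K4piece {c m k : ℕ} (w u : Ω) (hu : u ∈ O.S.gr c) {ζ ξ : Gw}
    (hζ : ζ ∈ C.S.gr m) (hξ : ξ ∈ C.S.gr k) (qη : Gw ⊗[ℂ] Gw) :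
    ((-1 : ℂ) ^ ((m + k) * c)) • asm ((w * u) ⊗ₜ (C.tmulG (ζ ⊗ₜ ξ) qη)) =
      M3 O (asm (w ⊗ₜ (ζ ⊗ₜ ξ))) (asm (u ⊗ₜ qη)) := by
  induction qη using homog2_induction C.S.toGrStarAlg C.S.toGrStarAlg with
  | h0 => simp only [map_zero, TensorProduct.tmul_zero, smul_zero, LinearMap.map_zero]
  | hadd q₁ q₂ h₁ h₂ =>
    simp only [map_add, TensorProduct.tmul_add, smul_add, h₁, h₂]
  | hs r s ζ' ξ' hζ' hξ' =>
    rw [C.tmulG_spec ζ ζ' ξ ξ' hξ hζ', TensorProduct.tmul_smul, map_smul, asm_tmul, asm_tmul,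
      asm_tmul, M3_eval O hξ, sM_pow_tmul O hu hζ' k, map_smul,
      O.tmul_spec w u ζ ζ' hζ hu]
    simp only [← TensorProduct.smul_tmul', smul_smul, ← pow_add]
    rw [show (m + k) * c + k * r = k * (c + r) + m * c by ring]

lemma K4 (p q : Ω ⊗[ℂ] Gw) :
    asm ((map LinearMap.id C.hatφ) (O.tmul p q)) =
      M3 O (asm ((map LinearMap.id C.hatφ) p)) (asm ((map LinearMap.id C.hatφ) q)) := by
  induction p using homog2_induction O.S.toGrStarAlg C.S.toGrStarAlg with
  | h0 => simp only [map_zero, LinearMap.zero_apply, LinearMap.map_zero]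
  | hadd p₁ p₂ h₁ h₂ => simp only [map_add, LinearMap.add_apply, h₁, h₂]
  | hs a b w θ hw hθ =>
    induction q using homog2_induction O.S.toGrStarAlg C.S.toGrStarAlg with
    | h0 => simp only [map_zero, LinearMap.map_zero]
    | hadd q₁ q₂ h₁ h₂ => simp only [map_add, h₁, h₂]
    | hs c d u η hu hη =>
      rw [O.tmul_spec w u θ η hθ hu, map_smul, map_smul, TensorProduct.map_tmul,
        TensorProduct.map_tmul, TensorProduct.map_tmul, LinearMap.id_apply, LinearMap.id_apply,
        LinearMap.id_apply, C.hatφ_mul]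
      refine pure_induction C.S.toGrStarAlg C.S.toGrStarAlg (b := b)
        (Q := fun qθ => ((-1 : ℂ) ^ (b * c)) • asm ((w * u) ⊗ₜ (C.tmulG qθ (C.hatφ η))) =
          M3 O (asm (w ⊗ₜ qθ)) (asm (u ⊗ₜ (C.hatφ η)))) ?_ ?_ ?_
        (fun i j h => hatφ_grade hθ h)
      · simp only [map_zero, LinearMap.zero_apply, TensorProduct.tmul_zero, smul_zero,
          LinearMap.map_zero]
      · intro q₁ q₂ h₁ h₂
        simp only [map_add, LinearMap.add_apply, TensorProduct.tmul_add, smul_add, h₁, h₂]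
      · intro m k hmk ζ ξ hζ hξ
        have h := K4piece O w u hu hζ hξ (C.hatφ η)
        rwa [hmk] at h

end St2
set_option synthInstance.maxHeartbeats 400000

namespace St2

open TensorProduct

variable {A : Type} [Ring A] [HopfAlgebra ℂ A] [StarRing A]
variable {Gw : Type} [Ring Gw] [Algebra ℂ Gw]
variable {V B : Type} [Ring V] [Algebra ℂ V] [StarRing V] [Ring B] [Algebra ℂ B] [StarRing B]
variable {Ω : Type} [Ring Ω] [Algebra ℂ Ω]
variable {C : GroupCalc A Gw} {P : QPB A V B}
variable (O : Calc A Gw V B Ω C P)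

lemma part1_gen_aux1 (t : B ⊗[ℂ] A) :
    (map O.Fh LinearMap.id) ((map O.ιB.toLinearMap C.ι.toLinearMap) t) =
      (map (map O.ιB.toLinearMap C.ι.toLinearMap) C.ι.toLinearMap)
        ((map P.F.toLinearMap LinearMap.id) t) := by
  induction t using TensorProduct.induction_on with
  | zero => simp only [map_zero]
  | tmul b' a =>
    simp only [TensorProduct.map_tmul, LinearMap.id_apply, AlgHom.toLinearMap_apply]
    rw [O.Fh_extends b']
  | add t₁ t₂ h₁ h₂ => simp only [map_add, h₁, h₂]

lemma part1_gen_aux2 (t : B ⊗[ℂ] A) :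
    asm ((map LinearMap.id C.hatφ) ((map O.ιB.toLinearMap C.ι.toLinearMap) t)) =
      (map (map O.ιB.toLinearMap C.ι.toLinearMap) C.ι.toLinearMap)
        ((TensorProduct.assoc ℂ B A A).symm
          ((map LinearMap.id (Coalgebra.comul (R := ℂ))) t)) := by
  induction t using TensorProduct.induction_on with
  | zero => simp only [map_zero]
  | tmul b' a =>
    simp only [TensorProduct.map_tmul, LinearMap.id_apply, AlgHom.toLinearMap_apply]
    rw [C.hatφ_ι a]
    induction (Coalgebra.comul (R := ℂ) a : A ⊗[ℂ] A) using TensorProduct.induction_on with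
    | zero => simp only [map_zero, TensorProduct.tmul_zero]
    | tmul a₁ a₂ =>
      simp only [TensorProduct.map_tmul, AlgHom.toLinearMap_apply, TensorProduct.assoc_symm_tmul]
      exact asm_tmul _ _ _
    | add s₁ s₂ h₁ h₂ =>
      simp only [map_add, TensorProduct.tmul_add, h₁, h₂]
  | add t₁ t₂ h₁ h₂ => simp only [map_add, h₁, h₂]

lemma part1_gen (b : B) :
    (map O.Fh LinearMap.id) (O.Fh (O.ιB b)) =
      asm ((map LinearMap.id C.hatφ) (O.Fh (O.ιB b))) := by
  rw [O.Fh_extends b, part1_gen_aux1 O, part1_gen_aux2 O]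
  congr 1
  refine ((LinearEquiv.symm_apply_eq _).2 ?_).symm
  exact (P.coassoc_F b).symm

lemma part1 (x : Ω) :
    (map O.Fh LinearMap.id) (O.Fh x) = asm ((map LinearMap.id C.hatφ) (O.Fh x)) := by
  set LL : Ω →ₗ[ℂ] (Ω ⊗[ℂ] Gw) ⊗[ℂ] Gw := (map O.Fh LinearMap.id) ∘ₗ O.Fh with hLL
  set RRm : Ω →ₗ[ℂ] (Ω ⊗[ℂ] Gw) ⊗[ℂ] Gw :=
    asm ∘ₗ (map LinearMap.id C.hatφ) ∘ₗ O.Fh with hRR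
  have key : ∀ y : Ω, y ∈ LinearMap.ker (LL - RRm) := by
    refine O.generated _ ?_ ?_ ?_
    · intro b
      rw [LinearMap.mem_ker, LinearMap.sub_apply, sub_eq_zero]
      exact part1_gen O b
    · intro y z hy hz
      rw [LinearMap.mem_ker, LinearMap.sub_apply, sub_eq_zero] at hy hz ⊢
      have hy' : (map O.Fh LinearMap.id) (O.Fh y) = asm ((map LinearMap.id C.hatφ) (O.Fh y)) := hy
      have hz' : (map O.Fh LinearMap.id) (O.Fh z) = asm ((map LinearMap.id C.hatφ) (O.Fh z)) := hz
      show (map O.Fh LinearMap.id) (O.Fh (y * z)) =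
        asm ((map LinearMap.id C.hatφ) (O.Fh (y * z)))
      rw [O.Fh_mul, K3 O, hy', hz', ← K4 O]
    · intro y hy
      rw [LinearMap.mem_ker, LinearMap.sub_apply, sub_eq_zero] at hy ⊢
      have hy' : (map O.Fh LinearMap.id) (O.Fh y) = asm ((map LinearMap.id C.hatφ) (O.Fh y)) := hy
      show (map O.Fh LinearMap.id) (O.Fh (O.S.d y)) =
        asm ((map LinearMap.id C.hatφ) (O.Fh (O.S.d y)))
      rw [O.Fh_d, K1 O, hy', ← K2 O]
  have hx := key x
  rw [LinearMap.mem_ker, LinearMap.sub_apply, sub_eq_zero] at hx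
  exact hx

end St2
namespace St2

open TensorProduct

lemma conj_zero {X : Type} [Ring X] [Algebra ℂ X] (G : GrStarAlg X) : G.conj 0 = 0 := by
  have h := G.conj_smul 0 0
  simpa using h

variable {A : Type} [Ring A] [HopfAlgebra ℂ A] [StarRing A]
variable {Gw : Type} [Ring Gw] [Algebra ℂ Gw]
variable {V B : Type} [Ring V] [Algebra ℂ V] [StarRing V] [Ring B] [Algebra ℂ B] [StarRing B]
variable {Ω : Type} [Ring Ω] [Algebra ℂ Ω]
variable {C : GroupCalc A Gw} {P : QPB A V B}
variable (O : Calc A Gw V B Ω C P)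

lemma exists_rep (t : B ⊗[ℂ] A) : ∃ (s : Finset ℕ) (bk : ℕ → B) (ck : ℕ → A),
    t = ∑ k ∈ s, bk k ⊗ₜ ck k := by
  induction t using TensorProduct.induction_on with
  | zero => exact ⟨∅, fun _ => 0, fun _ => 0, by simp⟩
  | tmul b c => exact ⟨{0}, fun _ => b, fun _ => c, by simp⟩
  | add t₁ t₂ h₁ h₂ =>
    obtain ⟨s₁, b₁, c₁, h₁⟩ := h₁
    obtain ⟨s₂, b₂, c₂, h₂⟩ := h₂
    refine ⟨s₁.image (fun k => 2 * k) ∪ s₂.image (fun k => 2 * k + 1),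
      fun k => if k % 2 = 0 then b₁ (k / 2) else b₂ (k / 2),
      fun k => if k % 2 = 0 then c₁ (k / 2) else c₂ (k / 2), ?_⟩
    rw [Finset.sum_union (by
      simp only [Finset.disjoint_left, Finset.mem_image]
      rintro x ⟨k, _, rfl⟩ ⟨l, _, hl⟩
      omega)]
    rw [Finset.sum_image (fun a _ b _ h => by omega),
      Finset.sum_image (fun a _ b _ h => by omega)]
    rw [h₁, h₂]
    congr 1
    · refine Finset.sum_congr rfl fun k _ => ?_
      simp only []
      rw [if_pos (by omega : 2 * k % 2 = 0), if_pos (by omega : 2 * k % 2 = 0),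
        show 2 * k / 2 = k by omega]
    · refine Finset.sum_congr rfl fun k _ => ?_
      simp only []
      rw [if_neg (by omega : ¬(2 * k + 1) % 2 = 0), if_neg (by omega : ¬(2 * k + 1) % 2 = 0),
        show (2 * k + 1) / 2 = k by omega]

lemma tconj_zero : O.tconj 0 = 0 := by
  have h := O.tconj_spec 0 0
  rw [TensorProduct.zero_tmul] at h
  rw [h, conj_zero O.S.toGrStarAlg, TensorProduct.zero_tmul]

lemma tconj_smul (c : ℂ) (p : Ω ⊗[ℂ] Gw) :
    O.tconj (c • p) = (starRingEnd ℂ) c • O.tconj p := by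
  induction p using TensorProduct.induction_on with
  | zero => rw [smul_zero, tconj_zero O, smul_zero]
  | tmul w θ =>
    rw [TensorProduct.smul_tmul', O.tconj_spec, O.tconj_spec, O.S.conj_smul,
      TensorProduct.smul_tmul']
  | add p q hp hq => rw [smul_add, O.tconj_add, hp, hq, O.tconj_add, smul_add]

lemma tconj_sum {ι : Type} (s : Finset ι) (f : ι → Ω ⊗[ℂ] Gw) :
    O.tconj (∑ i ∈ s, f i) = ∑ i ∈ s, O.tconj (f i) := by
  classical
  induction s using Finset.induction_on with
  | empty => simpa using tconj_zero O
  | insert _ _ hx ih =>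
    rw [Finset.sum_insert hx, Finset.sum_insert hx, O.tconj_add, ih]

/-- The hermiticity condition at a point. -/
def Cond (x : Ω) : Prop := O.Fh (O.S.conj x) = O.tconj (O.Fh x)

lemma cond_zero : Cond O 0 := by
  show O.Fh (O.S.conj 0) = O.tconj (O.Fh 0)
  rw [conj_zero O.S.toGrStarAlg]
  simp only [map_zero, tconj_zero O]

lemma cond_add {x y : Ω} (hx : Cond O x) (hy : Cond O y) : Cond O (x + y) := by
  rw [Cond, O.S.conj_add, map_add, map_add, O.tconj_add, hx, hy]

lemma cond_smul (c : ℂ) {x : Ω} (hx : Cond O x) : Cond O (c • x) := by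
  rw [Cond, O.S.conj_smul, map_smul, map_smul, tconj_smul, hx]

lemma cond_sum {ι : Type} (s : Finset ι) (f : ι → Ω) (h : ∀ i ∈ s, Cond O (f i)) :
    Cond O (∑ i ∈ s, f i) := by
  classical
  induction s using Finset.induction_on with
  | empty => simpa using cond_zero O
  | insert _ _ hx ih =>
    rw [Finset.sum_insert hx]
    exact cond_add O (h _ (Finset.mem_insert_self _ _))
      (ih fun i hi => h i (Finset.mem_insert_of_mem hi))

lemma tconj_td (p : Ω ⊗[ℂ] Gw) : O.tconj (O.td p) = O.td (O.tconj p) := by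
  induction p using homog2_induction O.S.toGrStarAlg C.S.toGrStarAlg with
  | h0 => simp only [map_zero, tconj_zero O]
  | hadd p q hp hq => rw [map_add, O.tconj_add, hp, hq, O.tconj_add, map_add]
  | hs a b w θ hw hθ =>
    rw [O.td_spec w θ hw, O.tconj_add, tconj_smul, O.tconj_spec, O.tconj_spec, O.tconj_spec,
      O.td_spec _ _ (O.S.conj_mem hw), O.S.d_conj, C.S.d_conj]
    congr 2
    simp

lemma tconj_tmul {a b : ℕ} {p q : Ω ⊗[ℂ] Gw}
    (hp : ∀ i j : ℕ, i + j ≠ a → (map (O.S.proj i) (C.S.proj j)) p = 0)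
    (hq : ∀ i j : ℕ, i + j ≠ b → (map (O.S.proj i) (C.S.proj j)) q = 0) :
    O.tconj (O.tmul p q) = ((-1 : ℂ) ^ (a * b)) • O.tmul (O.tconj q) (O.tconj p) := by
  refine pure_induction O.S.toGrStarAlg C.S.toGrStarAlg (b := a)
    (Q := fun p => O.tconj (O.tmul p q) =
      ((-1 : ℂ) ^ (a * b)) • O.tmul (O.tconj q) (O.tconj p)) ?_ ?_ ?_ hp
  · simp only [map_zero, LinearMap.zero_apply, tconj_zero O, smul_zero]
  · intro p₁ p₂ h₁ h₂
    rw [map_add, LinearMap.add_apply, O.tconj_add, h₁, h₂, O.tconj_add, map_add, smul_add]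
  · intro k l hkl w θ hw hθ
    refine pure_induction O.S.toGrStarAlg C.S.toGrStarAlg (b := b)
      (Q := fun q => O.tconj (O.tmul (w ⊗ₜ θ) q) =
        ((-1 : ℂ) ^ (a * b)) • O.tmul (O.tconj q) (O.tconj (w ⊗ₜ θ))) ?_ ?_ ?_ hq
    · simp only [map_zero, tconj_zero O, LinearMap.zero_apply, smul_zero]
    · intro q₁ q₂ h₁ h₂
      rw [map_add, O.tconj_add, h₁, h₂, O.tconj_add, map_add, LinearMap.add_apply, smul_add]
    · intro r s hrs u η hu hη
      rw [O.tmul_spec w u θ η hθ hu, tconj_smul, O.tconj_spec, O.tconj_spec, O.tconj_spec,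
        O.S.conj_mul hw hu, C.S.conj_mul hθ hη,
        O.tmul_spec _ _ _ _ (C.S.conj_mem hη) (O.S.conj_mem hw)]
      simp only [TensorProduct.smul_tmul', TensorProduct.tmul_smul, smul_smul, map_pow,
        map_neg, map_one, ← pow_mul, ← pow_add]
      have hsc : ((-1 : ℂ)) ^ (l * r + (l * s + k * r)) = (-1 : ℂ) ^ (a * b + s * k) := by
        apply neg_one_pow_congr'
        have he : a * b + s * k = l * r + (l * s + k * r) + 2 * (k * s) := by
          subst hkl hrs; ring
        rw [he, Nat.add_mul_mod_self_left]
      rw [hsc]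

lemma cond_gen (b : B) : Cond O (O.ιB b) := by
  obtain ⟨s, bk, ck, hrep⟩ := exists_rep (P.F b)
  show O.Fh (O.S.conj (O.ιB b)) = O.tconj (O.Fh (O.ιB b))
  rw [O.ιB_conj b, O.Fh_extends, O.Fh_extends, P.F_star b s bk ck hrep, hrep, map_sum, map_sum,
    tconj_sum]
  refine Finset.sum_congr rfl fun k _ => ?_
  rw [TensorProduct.map_tmul, TensorProduct.map_tmul, O.tconj_spec]
  simp only [AlgHom.toLinearMap_apply, O.ιB_conj, C.ι_conj]

lemma cond_homog_mul {a b : ℕ} {x y : Ω} (hx : x ∈ O.S.gr a) (hy : y ∈ O.S.gr b)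
    (cx : Cond O x) (cy : Cond O y) : Cond O (x * y) := by
  rw [Cond, O.S.conj_mul hx hy, map_smul, O.Fh_mul, O.Fh_mul, cx, cy,
    tconj_tmul O (O.Fh_grade hx) (O.Fh_grade hy)]

lemma cond_homog_d {x : Ω} (cx : Cond O x) : Cond O (O.S.d x) := by
  rw [Cond, ← O.S.d_conj, O.Fh_d, O.Fh_d, cx, tconj_td]

/-- The hermiticity submodule. -/
noncomputable def W2 : Submodule ℂ Ω where
  carrier := {x | ∀ n, Cond O (O.S.proj n x)}
  add_mem' := fun hx hy n => by rw [map_add]; exact cond_add O (hx n) (hy n)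
  zero_mem' := fun n => by rw [map_zero]; exact cond_zero O
  smul_mem' := fun c x hx n => by rw [map_smul]; exact cond_smul O c (hx n)

lemma mem_W2 {x : Ω} : x ∈ W2 O ↔ ∀ n, Cond O (O.S.proj n x) := Iff.rfl

lemma W2_eq_top : ∀ x : Ω, x ∈ W2 O := by
  refine O.generated (W2 O) ?_ ?_ ?_
  · intro b n
    by_cases hn : n = 0
    · subst hn
      rw [O.S.proj_of_mem (O.ιB_mem b)]
      exact cond_gen O b
    · rw [O.S.proj_of_ne (O.ιB_mem b) hn]
      exact cond_zero O
  · intro x y hx hy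
    obtain ⟨N, hN⟩ := O.S.toGrStarAlg.exists_decomp x
    obtain ⟨M, hM⟩ := O.S.toGrStarAlg.exists_decomp y
    intro n
    rw [hN, hM, Finset.sum_mul_sum, map_sum]
    refine cond_sum O _ _ fun i _ => ?_
    rw [map_sum]
    refine cond_sum O _ _ fun j _ => ?_
    by_cases hn : n = i + j
    · subst hn
      rw [O.S.proj_of_mem (O.S.mul_mem (O.S.proj_mem i x) (O.S.proj_mem j y))]
      exact cond_homog_mul O (O.S.proj_mem i x) (O.S.proj_mem j y) (hx i) (hy j)
    · rw [O.S.proj_of_ne (O.S.mul_mem (O.S.proj_mem i x) (O.S.proj_mem j y)) hn]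
      exact cond_zero O
  · intro x hx
    obtain ⟨N, hN⟩ := O.S.toGrStarAlg.exists_decomp x
    intro n
    rw [hN, map_sum, map_sum]
    refine cond_sum O _ _ fun i _ => ?_
    by_cases hn : n = i + 1
    · subst hn
      rw [O.S.proj_of_mem (O.S.d_mem (O.S.proj_mem i x))]
      exact cond_homog_d O (hx i)
    · rw [O.S.proj_of_ne (O.S.d_mem (O.S.proj_mem i x)) hn]
      exact cond_zero O

lemma part2 (x : Ω) : O.Fh (O.S.conj x) = O.tconj (O.Fh x) := by
  have hx := W2_eq_top O x
  obtain ⟨N, hN⟩ := O.S.toGrStarAlg.exists_decomp x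
  have hc : Cond O x := by
    rw [hN]
    exact cond_sum O _ _ fun i _ => hx i
  exact hc

end St2
section Statement

variable {A : Type} [Ring A] [HopfAlgebra ℂ A] [StarRing A]
variable {Gw : Type} [Ring Gw] [Algebra ℂ Gw]
variable {V B : Type} [Ring V] [Algebra ℂ V] [StarRing V] [Ring B] [Algebra ℂ B] [StarRing B]
variable {Ω : Type} [Ring Ω] [Algebra ℂ Ω]
variable {C : GroupCalc A Gw} {P : QPB A V B}

/-- The extension `F̂ : Ω(P) → Ω(P) ⊗̂ Γ^∧` of `F` satisfies
`(F̂ ⊗ id)F̂ = (id ⊗ φ̂)F̂`, and is hermitian: `F̂ ∘ * = (* ⊗ *) ∘ F̂`. -/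
theorem statement2 (O : Calc A Gw V B Ω C P) :
    (∀ x : Ω, (map O.Fh LinearMap.id) (O.Fh x) =
      (TensorProduct.assoc ℂ Ω Gw Gw).symm ((map LinearMap.id C.hatφ) (O.Fh x))) ∧
    (∀ x : Ω, O.Fh (O.S.conj x) = O.tconj (O.Fh x)) := by
  exact ⟨fun x => St2.part1 O x, fun x => St2.part2 O x⟩

end Statement

end
end

section
/- The sequence 0→hor^1(P)→Ω^1(P)→ver^1(P)→0 is exact, where the first map is the inclusion of first-order horizontal forms and the second map is the verticalization homomorphism π_v restricted to Ω^1(P); that is, π_v maps Ω^1(P) onto ver^1(P)=B⊗Γ_inv, and its kernel in Ω^1(P) equals hor^1(P). -/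
set_option maxHeartbeats 1000000
set_option synthInstance.maxHeartbeats 400000

open TensorProduct

noncomputable section

variable (A : Type) [Ring A] [HopfAlgebra ℂ A]

section TPsec

variable {A : Type} [Ring A] [HopfAlgebra ℂ A] [StarRing A]
variable {Gw : Type} [Ring Gw] [Algebra ℂ Gw]
variable {Ω : Type} [Ring Ω] [Algebra ℂ Ω]

/-- The left ideal `T(P)` of `Ω(P)` generated by `r_ω(R)`. -/
def TP (C : GroupCalc A Gw) (ω : ↥(C.Inv 1) →ₗ[ℂ] Ω) : Submodule ℂ Ω :=
  Submodule.span ℂ {x | ∃ w : Ω, ∃ a ∈ C.Rid, x = w * rOmega C ω a}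

end TPsec

section Ver

variable {A : Type} [Ring A] [HopfAlgebra ℂ A] [StarRing A]
variable {Gw : Type} [Ring Gw] [Algebra ℂ Gw]
variable {V B : Type} [Ring V] [Algebra ℂ V] [StarRing V] [Ring B] [Algebra ℂ B] [StarRing B]
variable (C : GroupCalc A Gw) (P : QPB A V B)

/-- The inclusion `ver(P) = B ⊗ Γ_inv^∧ → B ⊗ Γ^∧`. -/
def verIncl : (B ⊗[ℂ] ↥(C.InvT)) →ₗ[ℂ] (B ⊗[ℂ] Gw) :=
  map LinearMap.id C.InvT.subtype

/-- The degree-`n` part `B ⊗ Γ_inv^{∧n}` of `ver(P)`. -/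
def verGr (n : ℕ) : Submodule ℂ (B ⊗[ℂ] ↥(C.InvT)) :=
  LinearMap.range (map (LinearMap.id (M := B)) (Submodule.inclusion (C.Inv_le_InvT n)))

/-- The graded-differential *-algebra `ver(P) = B ⊗ Γ_inv^∧` of verticalized
differential forms (Lemma 3.1), given by the formulas
`(q ⊗ η)(b ⊗ θ) = Σ_k q b_k ⊗ (η ∘ c_k)θ`,
`d_v(b ⊗ θ) = b ⊗ dθ + Σ_k b_k ⊗ π(c_k)θ` and
`(b ⊗ θ)^* = Σ_k b_k^* ⊗ (θ^* ∘ c_k^*)`, where `F(b) = Σ_k b_k ⊗ c_k`. -/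
structure VerData where
  vmul : (B ⊗[ℂ] ↥(C.InvT)) →ₗ[ℂ] (B ⊗[ℂ] ↥(C.InvT)) →ₗ[ℂ] (B ⊗[ℂ] ↥(C.InvT))
  vone : B ⊗[ℂ] ↥(C.InvT)
  vone_def : vone = (1 : B) ⊗ₜ ⟨(1 : Gw), C.Inv_le_InvT 0 C.Inv_one⟩
  vmul_assoc : ∀ x y z, vmul (vmul x y) z = vmul x (vmul y z)
  vone_mul : ∀ x, vmul vone x = x
  vmul_vone : ∀ x, vmul x vone = x
  vmul_spec : ∀ (q b : B) (η θ : ↥(C.InvT)) (s : Finset ℕ) (bk : ℕ → B) (ck : ℕ → A),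
    P.F b = ∑ k ∈ s, bk k ⊗ₜ ck k →
    verIncl C (vmul (q ⊗ₜ η) (b ⊗ₜ θ)) =
      ∑ k ∈ s, (q * bk k) ⊗ₜ (C.circ (η : Gw) (ck k) * (θ : Gw))
  vd : (B ⊗[ℂ] ↥(C.InvT)) →ₗ[ℂ] (B ⊗[ℂ] ↥(C.InvT))
  vd_spec : ∀ (b : B) (θ : ↥(C.InvT)) (s : Finset ℕ) (bk : ℕ → B) (ck : ℕ → A),
    P.F b = ∑ k ∈ s, bk k ⊗ₜ ck k →
    verIncl C (vd (b ⊗ₜ θ)) =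
      b ⊗ₜ (C.S.d (θ : Gw)) + ∑ k ∈ s, bk k ⊗ₜ (C.π (ck k) * (θ : Gw))
  vd_sq : ∀ x, vd (vd x) = 0
  vconj : (B ⊗[ℂ] ↥(C.InvT)) → (B ⊗[ℂ] ↥(C.InvT))
  vconj_add : ∀ x y, vconj (x + y) = vconj x + vconj y
  vconj_spec : ∀ (b : B) (θ : ↥(C.InvT)) (s : Finset ℕ) (bk : ℕ → B) (ck : ℕ → A),
    P.F b = ∑ k ∈ s, bk k ⊗ₜ ck k →
    verIncl C (vconj (b ⊗ₜ θ)) =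
      ∑ k ∈ s, star (bk k) ⊗ₜ (C.circ (C.S.conj (θ : Gw)) (star (ck k)))
  vgenerated : ∀ W : Submodule ℂ (B ⊗[ℂ] ↥(C.InvT)),
    (∀ b : B, (b ⊗ₜ (⟨(1 : Gw), C.Inv_le_InvT 0 C.Inv_one⟩ : ↥(C.InvT))) ∈ W) →
    (∀ x y, x ∈ W → y ∈ W → vmul x y ∈ W) → (∀ x ∈ W, vd x ∈ W) → ∀ x, x ∈ W

end Ver

section Aux

lemma tensorRep {M N : Type} [AddCommGroup M] [Module ℂ M] [AddCommGroup N] [Module ℂ N]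
    (z : M ⊗[ℂ] N) : ∃ (s : Finset ℕ) (xk : ℕ → M) (yk : ℕ → N),
      z = ∑ k ∈ s, xk k ⊗ₜ yk k := by
  induction z using TensorProduct.induction_on with
  | zero => exact ⟨∅, fun _ => 0, fun _ => 0, by simp⟩
  | tmul x y => exact ⟨{0}, fun _ => x, fun _ => y, by simp⟩
  | add z₁ z₂ h₁ h₂ =>
    obtain ⟨s₁, x₁, y₁, rfl⟩ := h₁
    obtain ⟨s₂, x₂, y₂, rfl⟩ := h₂
    refine ⟨s₁.image (fun k => 2*k) ∪ s₂.image (fun k => 2*k+1),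
      fun k => if k % 2 = 0 then x₁ (k/2) else x₂ (k/2),
      fun k => if k % 2 = 0 then y₁ (k/2) else y₂ (k/2), ?_⟩
    rw [Finset.sum_union, Finset.sum_image (fun a _ b _ (h : 2*a = 2*b) => by omega),
      Finset.sum_image (fun a _ b _ (h : 2*a+1 = 2*b+1) => by omega)]
    · congr 1
      · refine Finset.sum_congr rfl fun k _ => ?_
        have h2 : 2*k/2 = k := by omega
        have h3 : 2*k % 2 = 0 := by omega
        simp [h2, h3]
      · refine Finset.sum_congr rfl fun k _ => ?_
        have h2 : (2*k+1)/2 = k := by omega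
        have h3 : (2*k+1) % 2 = 1 := by omega
        simp [h2, h3]
    · rw [Finset.disjoint_left]
      rintro a ha hb
      simp only [Finset.mem_image] at ha hb
      omega

lemma grSum {Ω' : Type} [Ring Ω'] [Algebra ℂ Ω'] (G : GrStarAlg Ω') (x : Ω') :
    ∃ N, ∀ M, N ≤ M → x = ∑ n ∈ Finset.range M, G.proj n x := by
  classical
  obtain ⟨f, rfl⟩ := G.direct.surjective x
  have hx : (DirectSum.coeAddMonoidHom G.gr) f = ∑ i ∈ f.support, ((f i : Ω')) := by
    conv_lhs => rw [← DirectSum.sum_support_of f]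
    rw [map_sum]
    exact Finset.sum_congr rfl fun i _ => DirectSum.coeAddMonoidHom_of _ _ _
  refine ⟨f.support.sup id + 1, fun M hM => ?_⟩
  have hproj : ∀ n, G.proj n ((DirectSum.coeAddMonoidHom G.gr) f)
      = if n ∈ f.support then (f n : Ω') else 0 := by
    intro n
    rw [hx, map_sum]
    by_cases hn : n ∈ f.support
    · rw [if_pos hn, Finset.sum_eq_single n
        (fun i _ hi => G.proj_of_ne (f i).2 (Ne.symm hi)) (fun h => absurd hn h)]
      exact G.proj_of_mem (f n).2
    · rw [if_neg hn]
      refine Finset.sum_eq_zero fun i hi => G.proj_of_ne (f i).2 ?_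
      rintro rfl; exact hn hi
  calc (DirectSum.coeAddMonoidHom G.gr) f
      = ∑ i ∈ f.support, ((f i : Ω')) := hx
    _ = ∑ n ∈ Finset.range M, if n ∈ f.support then (f n : Ω') else 0 := by
        rw [Finset.sum_ite_mem, Finset.inter_comm,
          Finset.inter_eq_left.mpr (fun i hi => Finset.mem_range.mpr
            (lt_of_lt_of_le (Nat.lt_succ_of_le (Finset.le_sup (f := id) hi)) hM))]
    _ = _ := Finset.sum_congr rfl fun n _ => (hproj n).symm

lemma proj_proj {Ω' : Type} [Ring Ω'] [Algebra ℂ Ω'] (G : GrStarAlg Ω') (m n : ℕ) (x : Ω') :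
    G.proj m (G.proj n x) = if m = n then G.proj n x else 0 := by
  split
  · next h => subst h; exact G.proj_of_mem (G.proj_mem _ _)
  · next h => exact G.proj_of_ne (G.proj_mem _ _) h

end Aux

set_option linter.unusedSectionVars false
section HopfAux
variable {A : Type} [Ring A] [HopfAlgebra ℂ A] [StarRing A]
variable {Gw : Type} [Ring Gw] [Algebra ℂ Gw]
variable (C : GroupCalc A Gw)

lemma counit_smul_rep {a : A} {ι : Type} (r : Coalgebra.Repr ℂ a ι) :
    ∑ i ∈ r.index, (Coalgebra.counit (R := ℂ) (r.left i)) • r.right i = a := by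
  have h2 := congrArg (TensorProduct.lid ℂ A) (Coalgebra.sum_counit_tmul_eq r)
  simp only [map_sum, TensorProduct.lid_tmul] at h2
  simpa using h2

lemma Hgen (f : A →ₗ[ℂ] Gw) (a : A) :
    LinearMap.mul' ℂ Gw ((map C.ι.toLinearMap
      ((LinearMap.mul' ℂ Gw) ∘ₗ (map (C.ι.toLinearMap ∘ₗ HopfAlgebra.antipode (R := ℂ)) f) ∘ₗ
        Coalgebra.comul (R := ℂ))) (Coalgebra.comul (R := ℂ) a)) = f a := by
  classical
  set ι' := C.ι.toLinearMap with hι'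
  let r : Coalgebra.Repr ℂ a (A × A) := Coalgebra.Repr.arbitrary ℂ a
  let a₁ : ∀ i : A × A, Coalgebra.Repr ℂ (r.left i) (A × A) := fun i => Coalgebra.Repr.arbitrary ℂ _
  let a₂ : ∀ i : A × A, Coalgebra.Repr ℂ (r.right i) (A × A) := fun i => Coalgebra.Repr.arbitrary ℂ _
  have key := Coalgebra.sum_map_tmul_tmul_eq (R := ℂ)
      ι' (ι' ∘ₗ HopfAlgebra.antipode (R := ℂ)) f a (repr := r) (a₁ := a₁) (a₂ := a₂)
  have μkey := congrArg (fun z => (LinearMap.mul' ℂ Gw ∘ₗ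
      LinearMap.lTensor Gw (LinearMap.mul' ℂ Gw)) z) key
  simp only [map_sum, LinearMap.comp_apply, LinearMap.lTensor_tmul,
    LinearMap.mul'_apply] at μkey
  -- LHS of the goal equals the LHS of μkey
  have expand : LinearMap.mul' ℂ Gw ((map ι'
      ((LinearMap.mul' ℂ Gw) ∘ₗ (map (ι' ∘ₗ HopfAlgebra.antipode (R := ℂ)) f) ∘ₗ
        Coalgebra.comul (R := ℂ))) (Coalgebra.comul (R := ℂ) a)) =
      ∑ i ∈ r.index, ∑ j ∈ (a₂ i).index,
        ι' (r.left i) * ((ι' ∘ₗ HopfAlgebra.antipode (R := ℂ)) ((a₂ i).left j) *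
          f ((a₂ i).right j)) := by
    rw [← r.eq, map_sum, map_sum]
    refine Finset.sum_congr rfl fun i _ => ?_
    rw [map_tmul, LinearMap.mul'_apply, LinearMap.comp_apply, LinearMap.comp_apply,
      ← (a₂ i).eq, map_sum, map_sum, Finset.mul_sum]
    refine Finset.sum_congr rfl fun j _ => ?_
    rw [map_tmul, LinearMap.mul'_apply]
  rw [expand]
  simp only [LinearMap.comp_apply]
  rw [μkey]
  -- now compute the right-hand side
  have step : ∀ i ∈ r.index, ∑ j ∈ (a₁ i).index,
      ι' ((a₁ i).left j) * (ι' (HopfAlgebra.antipode (R := ℂ) ((a₁ i).right j)) *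
        f (r.right i)) = (Coalgebra.counit (R := ℂ) (r.left i)) • f (r.right i) := by
    intro i _
    have : ∑ j ∈ (a₁ i).index,
        ι' ((a₁ i).left j) * (ι' (HopfAlgebra.antipode (R := ℂ) ((a₁ i).right j)) *
          f (r.right i)) =
        (∑ j ∈ (a₁ i).index,
          C.ι ((a₁ i).left j * HopfAlgebra.antipode (R := ℂ) ((a₁ i).right j))) *
            f (r.right i) := by
      rw [Finset.sum_mul]
      refine Finset.sum_congr rfl fun j _ => ?_
      rw [map_mul]
      simp [hι', mul_assoc]
    rw [this, ← map_sum, HopfAlgebra.sum_mul_antipode_eq_algebraMap_counit (a₁ i), AlgHom.commutes,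
      Algebra.algebraMap_eq_smul_one, smul_mul_assoc, one_mul]
  rw [Finset.sum_congr rfl step]
  have hs : ∑ i ∈ r.index, (Coalgebra.counit (R := ℂ) (r.left i)) • f (r.right i)
      = f (∑ i ∈ r.index, (Coalgebra.counit (R := ℂ) (r.left i)) • r.right i) := by
    rw [map_sum]
    exact Finset.sum_congr rfl fun i _ => (map_smul f _ _).symm
  rw [hs, counit_smul_rep r]

lemma circ_one_eq (a : A) :
    C.circ 1 a = (Coalgebra.counit (R := ℂ) a : ℂ) • (1 : Gw) := by
  classical
  rw [C.circ_eq]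
  let r : Coalgebra.Repr ℂ a (A × A) := Coalgebra.Repr.arbitrary ℂ a
  rw [← r.eq, map_sum, map_sum]
  have : ∀ i ∈ r.index, LinearMap.mul' ℂ Gw
      ((map (C.ι.toLinearMap ∘ₗ HopfAlgebra.antipode (R := ℂ))
        ((LinearMap.mulLeft ℂ (1 : Gw)) ∘ₗ C.ι.toLinearMap)) (r.left i ⊗ₜ r.right i)) =
      C.ι (HopfAlgebra.antipode (R := ℂ) (r.left i) * r.right i) := by
    intro i _
    rw [map_tmul, LinearMap.mul'_apply, map_mul]
    simp
  rw [Finset.sum_congr rfl this, ← map_sum, HopfAlgebra.sum_antipode_mul_eq_algebraMap_counit r,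
    AlgHom.commutes, Algebra.algebraMap_eq_smul_one]

lemma circ_expand (η : Gw) (a : A) :
    LinearMap.mul' ℂ Gw ((map C.ι.toLinearMap (C.circ η)) (Coalgebra.comul (R := ℂ) a)) =
      η * C.ι a := by
  have hc : C.circ η = (LinearMap.mul' ℂ Gw) ∘ₗ
      (map (C.ι.toLinearMap ∘ₗ HopfAlgebra.antipode (R := ℂ))
        ((LinearMap.mulLeft ℂ η) ∘ₗ C.ι.toLinearMap)) ∘ₗ Coalgebra.comul (R := ℂ) :=
    LinearMap.ext fun y => C.circ_eq η y
  rw [hc]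
  exact Hgen C ((LinearMap.mulLeft ℂ η) ∘ₗ C.ι.toLinearMap) a

lemma pi_expand (a : A) :
    LinearMap.mul' ℂ Gw ((map C.ι.toLinearMap C.π) (Coalgebra.comul (R := ℂ) a)) =
      C.S.d (C.ι a) := by
  rw [C.π_eq]
  exact Hgen C (C.S.d ∘ₗ C.ι.toLinearMap) a

end HopfAux

section Bridge
set_option linter.unusedSectionVars false
variable {A : Type} [Ring A] [HopfAlgebra ℂ A] [StarRing A]
variable {Gw : Type} [Ring Gw] [Algebra ℂ Gw]
variable {V B : Type} [Ring V] [Algebra ℂ V] [StarRing V] [Ring B] [Algebra ℂ B] [StarRing B]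
variable {Ω : Type} [Ring Ω] [Algebra ℂ Ω]
variable {C : GroupCalc A Gw} {P : QPB A V B}

lemma leftInv_exists {M N : Type} [AddCommGroup M] [Module ℂ M] [AddCommGroup N] [Module ℂ N]
    (f : M →ₗ[ℂ] N) (hf : Function.Injective f) : ∃ g : N →ₗ[ℂ] M, g ∘ₗ f = LinearMap.id :=
  f.exists_leftInverse_of_injective (LinearMap.ker_eq_bot.mpr hf)

lemma map_inj {M N M' N' : Type} [AddCommGroup M] [Module ℂ M] [AddCommGroup N] [Module ℂ N]
    [AddCommGroup M'] [Module ℂ M'] [AddCommGroup N'] [Module ℂ N']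
    (f : M →ₗ[ℂ] M') (g : N →ₗ[ℂ] N')
    (hf : Function.Injective f) (hg : Function.Injective g) :
    Function.Injective (map f g) := by
  obtain ⟨f', hf'⟩ := leftInv_exists f hf
  obtain ⟨g', hg'⟩ := leftInv_exists g hg
  intro x y hxy
  have h2 := congrArg (map f' g') hxy
  rwa [← LinearMap.comp_apply, ← LinearMap.comp_apply, ← TensorProduct.map_comp, hf', hg',
    TensorProduct.map_id, LinearMap.id_apply, LinearMap.id_apply] at h2

lemma tmul_one_cancel (h1 : (1 : Gw) ≠ 0) {x y : B} (h : x ⊗ₜ[ℂ] (1 : Gw) = y ⊗ₜ[ℂ] (1 : Gw)) :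
    x = y := by
  have hinj : Function.Injective (LinearMap.toSpanSingleton ℂ Gw 1) := by
    intro c d hcd
    by_contra hne
    have h2 : ((c - d) : ℂ) • (1 : Gw) = 0 := by
      simp only [LinearMap.toSpanSingleton_apply] at hcd
      rw [sub_smul, hcd, sub_self]
    have h3 : ((c - d)⁻¹ * (c - d)) • (1 : Gw) = 0 := by
      rw [mul_smul, h2, smul_zero]
    rw [inv_mul_cancel₀ (sub_ne_zero.mpr hne), one_smul] at h3
    exact h1 h3
  obtain ⟨g, hg⟩ := leftInv_exists _ hinj
  have g1 : g 1 = 1 := by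
    have := LinearMap.congr_fun hg (1 : ℂ)
    simpa using this
  have h2 := congrArg (fun z => (TensorProduct.rid ℂ B) ((map (LinearMap.id) g) z)) h
  simpa [g1] using h2

lemma verIncl_inj : Function.Injective (verIncl C (B := B)) :=
  map_inj _ _ (fun a b h => h) Subtype.val_injective

lemma mem_verGr_of {n : ℕ} {x : B ⊗[ℂ] ↥(C.InvT)} (u : B ⊗[ℂ] ↥(C.Inv n))
    (h : verIncl C x = map LinearMap.id (C.Inv n).subtype u) : x ∈ verGr C n := by
  refine ⟨u, ?_⟩
  apply verIncl_inj
  rw [h, verIncl, ← LinearMap.comp_apply, ← TensorProduct.map_comp,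
    Submodule.subtype_comp_inclusion, LinearMap.id_comp]

lemma d_one_eq_zero (S : GDSA Gw) : S.d 1 = 0 := by
  have h := S.leibniz S.one_mem 1
  rw [mul_one, mul_one, pow_zero, one_smul] at h
  have := congrArg (fun z => z - S.d 1) h
  simpa using this.symm

end Bridge

section Bridge2
set_option linter.unusedSectionVars false
variable {A : Type} [Ring A] [HopfAlgebra ℂ A] [StarRing A]
variable {Gw : Type} [Ring Gw] [Algebra ℂ Gw]
variable {V B : Type} [Ring V] [Algebra ℂ V] [StarRing V] [Ring B] [Algebra ℂ B] [StarRing B]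
variable {Ω : Type} [Ring Ω] [Algebra ℂ Ω]
variable {C : GroupCalc A Gw} {P : QPB A V B}

/-- The algebra map `ι_B ⊗ ι : B ⊗ A → Ω ⊗ Γ^∧`. -/
def Gmap (O : Calc A Gw V B Ω C P) : (B ⊗[ℂ] A) →ₐ[ℂ] (Ω ⊗[ℂ] Gw) :=
  Algebra.TensorProduct.map O.ιB C.ι

lemma Gmap_tmul (O : Calc A Gw V B Ω C P) (b : B) (a : A) :
    Gmap O (b ⊗ₜ a) = O.ιB b ⊗ₜ C.ι a := rfl

lemma Gmap_eq_map (O : Calc A Gw V B Ω C P) (z : B ⊗[ℂ] A) :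
    Gmap O z = (map O.ιB.toLinearMap C.ι.toLinearMap) z := by
  induction z using TensorProduct.induction_on with
  | zero => simp
  | tmul b a => rfl
  | add x y hx hy => rw [map_add, map_add, hx, hy]

/-- `Λ̃ : B ⊗ Γ^∧ → Ω ⊗ Γ^∧`, `b ⊗ g ↦ (ι_B ⊗ ι)(F b) · (1 ⊗ g)`. -/
def LamT (O : Calc A Gw V B Ω C P) : (B ⊗[ℂ] Gw) →ₗ[ℂ] (Ω ⊗[ℂ] Gw) :=
  (LinearMap.mul' ℂ (Ω ⊗[ℂ] Gw)) ∘ₗ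
    map ((Gmap O).toLinearMap ∘ₗ P.F.toLinearMap) (TensorProduct.mk ℂ Ω Gw 1)

lemma LamT_tmul (O : Calc A Gw V B Ω C P) (b : B) (g : Gw) :
    LamT O (b ⊗ₜ g) = (Gmap O (P.F b)) * ((1 : Ω) ⊗ₜ g) := by
  simp [LamT, LinearMap.mul'_apply]

/-- `Λ : ver(P) → Ω ⊗ Γ^∧`. -/
def Lam (O : Calc A Gw V B Ω C P) : (B ⊗[ℂ] ↥(C.InvT)) →ₗ[ℂ] (Ω ⊗[ℂ] Gw) :=
  LamT O ∘ₗ verIncl C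

lemma Lam_tmul (O : Calc A Gw V B Ω C P) (b : B) (θ : ↥(C.InvT)) :
    Lam O (b ⊗ₜ θ) = (Gmap O (P.F b)) * ((1 : Ω) ⊗ₜ (θ : Gw)) := by
  rw [Lam, LinearMap.comp_apply, verIncl]
  simp [LamT_tmul]

/-- `J = ι_B ⊗ incl : ver(P) → Ω ⊗ Γ^∧`, an injection. -/
def Jmap (O : Calc A Gw V B Ω C P) : (B ⊗[ℂ] ↥(C.InvT)) →ₗ[ℂ] (Ω ⊗[ℂ] Gw) :=
  map O.ιB.toLinearMap C.InvT.subtype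

lemma Jmap_inj (O : Calc A Gw V B Ω C P) : Function.Injective (Jmap O) :=
  map_inj _ _ O.ιB_inj Subtype.val_injective

/-- The counit property of `F`, derived from the `ver(P)` structure. -/
lemma counitF (O : Calc A Gw V B Ω C P) (Vd : VerData C P) (h1 : (1 : Gw) ≠ 0)
    {b : B} {s : Finset ℕ} {bk : ℕ → B} {ck : ℕ → A}
    (hF : P.F b = ∑ k ∈ s, bk k ⊗ₜ ck k) :
    ∑ k ∈ s, (Coalgebra.counit (R := ℂ) (ck k)) • bk k = b := by
  have h0 := Vd.vone_mul (b ⊗ₜ (⟨(1 : Gw), C.Inv_le_InvT 0 C.Inv_one⟩ : ↥(C.InvT)))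
  rw [Vd.vone_def] at h0
  have h2 := congrArg (verIncl C) h0
  rw [Vd.vmul_spec 1 b _ _ s bk ck hF] at h2
  have h3 : ∀ k ∈ s, ((1 : B) * bk k) ⊗ₜ[ℂ]
      (C.circ ((⟨(1 : Gw), C.Inv_le_InvT 0 C.Inv_one⟩ : ↥(C.InvT)) : Gw) (ck k) *
        ((⟨(1 : Gw), C.Inv_le_InvT 0 C.Inv_one⟩ : ↥(C.InvT)) : Gw)) =
      (Coalgebra.counit (R := ℂ) (ck k)) • (bk k ⊗ₜ[ℂ] (1 : Gw)) := by
    intro k _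
    rw [one_mul]
    simp only [circ_one_eq, smul_mul_assoc, one_mul]
    rw [TensorProduct.tmul_smul]
  rw [Finset.sum_congr rfl h3] at h2
  have h4 : verIncl C (b ⊗ₜ (⟨(1 : Gw), C.Inv_le_InvT 0 C.Inv_one⟩ : ↥(C.InvT))) =
      b ⊗ₜ (1 : Gw) := by simp [verIncl]
  rw [h4] at h2
  have h5 : (∑ k ∈ s, (Coalgebra.counit (R := ℂ) (ck k)) • bk k) ⊗ₜ[ℂ] (1 : Gw) =
      b ⊗ₜ[ℂ] (1 : Gw) := by
    rw [← h2, TensorProduct.sum_tmul]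
    exact Finset.sum_congr rfl fun k _ => by rw [TensorProduct.smul_tmul, TensorProduct.tmul_smul]
  exact tmul_one_cancel h1 h5

end Bridge2

section Bridge3
set_option linter.unusedSectionVars false
set_option linter.unusedVariables false
variable {A : Type} [Ring A] [HopfAlgebra ℂ A] [StarRing A]
variable {Gw : Type} [Ring Gw] [Algebra ℂ Gw]
variable {V B : Type} [Ring V] [Algebra ℂ V] [StarRing V] [Ring B] [Algebra ℂ B] [StarRing B]
variable {Ω : Type} [Ring Ω] [Algebra ℂ Ω]
variable {C : GroupCalc A Gw} {P : QPB A V B}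

lemma proj0_tmul (O : Calc A Gw V B Ω C P) (z₁ z₂ : Ω ⊗[ℂ] Gw) :
    (map (O.S.proj 0) LinearMap.id) (O.tmul z₁ z₂) =
      ((map (O.S.proj 0) LinearMap.id) z₁) * ((map (O.S.proj 0) LinearMap.id) z₂) := by
  induction z₁ using TensorProduct.induction_on with
  | zero => simp
  | add x y hx hy => simp only [map_add, LinearMap.add_apply, hx, hy, add_mul]
  | tmul w θ =>
  induction z₂ using TensorProduct.induction_on with
  | zero => simp
  | add x y hx hy => simp only [map_add, hx, hy, mul_add]
  | tmul u η =>
  obtain ⟨N₁, hw⟩ := grSum O.S.toGrStarAlg w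
  obtain ⟨N₂, hu⟩ := grSum O.S.toGrStarAlg u
  obtain ⟨N₃, hθ⟩ := grSum C.S.toGrStarAlg θ
  set M := N₁ + N₂ + N₃ + 1 with hM
  have hterm : ∀ p m n : ℕ, (map (O.S.proj 0) LinearMap.id)
      (O.tmul (O.S.proj p w ⊗ₜ C.S.proj m θ) (O.S.proj n u ⊗ₜ η)) =
      if p = 0 ∧ n = 0 then
        (O.S.proj 0 w * O.S.proj 0 u) ⊗ₜ (C.S.proj m θ * η) else 0 := by
    intro p m n
    rw [O.tmul_spec _ _ _ _ (C.S.proj_mem m θ) (O.S.proj_mem n u), map_smul, map_tmul]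
    by_cases hpn : p = 0 ∧ n = 0
    · obtain ⟨rfl, rfl⟩ := hpn
      rw [if_pos ⟨rfl, rfl⟩, mul_zero, pow_zero, one_smul, LinearMap.id_apply]
      congr 1
      exact O.S.proj_of_mem (O.S.mul_mem (O.S.proj_mem 0 w) (O.S.proj_mem 0 u))
    · rw [if_neg hpn]
      have h0 : (0 : ℕ) ≠ p + n := by omega
      rw [O.S.proj_of_ne (O.S.mul_mem (O.S.proj_mem p w) (O.S.proj_mem n u)) h0,
        TensorProduct.zero_tmul, smul_zero]
  conv_lhs => rw [hw M (by omega), hu M (by omega), hθ M (by omega)]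
  rw [TensorProduct.sum_tmul]
  simp only [TensorProduct.tmul_sum, TensorProduct.sum_tmul, map_sum, LinearMap.coe_sum,
    Finset.sum_apply]
  rw [Finset.sum_congr rfl fun n _ => Finset.sum_congr rfl fun p _ =>
    Finset.sum_congr rfl fun m _ => hterm p m n]
  have step1 : ∀ n ∈ Finset.range M, ∀ p ∈ Finset.range M,
      (∑ m ∈ Finset.range M, if p = 0 ∧ n = 0 then
        (O.S.proj 0 w * O.S.proj 0 u) ⊗ₜ[ℂ] (C.S.proj m θ * η) else 0) =
      if p = 0 ∧ n = 0 then (O.S.proj 0 w * O.S.proj 0 u) ⊗ₜ[ℂ] (θ * η) else 0 := by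
    intro n _ p _
    by_cases h : p = 0 ∧ n = 0
    · rw [Finset.sum_congr rfl fun m (_ : m ∈ Finset.range M) => if_pos h, if_pos h,
        ← TensorProduct.tmul_sum, ← Finset.sum_mul, ← hθ M (by omega)]
    · simp [if_neg h]
  rw [Finset.sum_congr rfl fun n hn => Finset.sum_congr rfl fun p hp => step1 n hn p hp]
  have step2 : ∀ n ∈ Finset.range M,
      (∑ p ∈ Finset.range M, if p = 0 ∧ n = 0 then
        (O.S.proj 0 w * O.S.proj 0 u) ⊗ₜ[ℂ] (θ * η) else 0) =
      if n = 0 then (O.S.proj 0 w * O.S.proj 0 u) ⊗ₜ[ℂ] (θ * η) else 0 := by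
    intro n _
    by_cases hn : n = 0
    · subst hn
      simp only [eq_self_iff_true, and_true, if_true]
      rw [Finset.sum_ite_eq' (Finset.range M) 0, if_pos (Finset.mem_range.mpr (by omega))]
    · simp [hn]
  rw [Finset.sum_congr rfl fun n hn => step2 n hn,
    Finset.sum_ite_eq' (Finset.range M) 0, if_pos (Finset.mem_range.mpr (by omega)),
    map_tmul, map_tmul, LinearMap.id_apply, LinearMap.id_apply,
    Algebra.TensorProduct.tmul_mul_tmul]

lemma proj0_td (O : Calc A Gw V B Ω C P) (z : Ω ⊗[ℂ] Gw) :
    (map (O.S.proj 0) LinearMap.id) (O.td z) =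
      (map LinearMap.id C.S.d) ((map (O.S.proj 0) LinearMap.id) z) := by
  induction z using TensorProduct.induction_on with
  | zero => simp
  | add x y hx hy => simp only [map_add, hx, hy]
  | tmul w θ =>
  obtain ⟨N, hw⟩ := grSum O.S.toGrStarAlg w
  have hterm : ∀ n : ℕ, (map (O.S.proj 0) LinearMap.id) (O.td (O.S.proj n w ⊗ₜ θ)) =
      if n = 0 then O.S.proj 0 w ⊗ₜ C.S.d θ else 0 := by
    intro n
    rw [O.td_spec _ _ (O.S.proj_mem n w), map_add, map_smul, map_tmul, map_tmul,
      O.S.proj_of_ne (O.S.d_mem (O.S.proj_mem n w)) (by omega : (0 : ℕ) ≠ n + 1),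
      TensorProduct.zero_tmul, zero_add, LinearMap.id_apply]
    by_cases hn : n = 0
    · subst hn
      rw [if_pos rfl, pow_zero, one_smul, O.S.proj_of_mem (O.S.proj_mem 0 w)]
    · rw [if_neg hn, O.S.proj_of_ne (O.S.proj_mem n w) (by omega : (0 : ℕ) ≠ n),
        TensorProduct.zero_tmul, smul_zero]
  conv_lhs => rw [hw (N + 1) (by omega)]
  rw [TensorProduct.sum_tmul, map_sum, map_sum,
    Finset.sum_congr rfl fun n _ => hterm n,
    Finset.sum_ite_eq' (Finset.range (N + 1)) 0 fun _ => O.S.proj 0 w ⊗ₜ C.S.d θ,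
    if_pos (Finset.mem_range.mpr (by omega))]
  rw [map_tmul, LinearMap.id_apply, map_tmul, LinearMap.id_apply]

end Bridge3

section Bridge4
set_option linter.unusedSectionVars false
set_option linter.unusedVariables false
variable {A : Type} [Ring A] [HopfAlgebra ℂ A] [StarRing A]
variable {Gw : Type} [Ring Gw] [Algebra ℂ Gw]
variable {V B : Type} [Ring V] [Algebra ℂ V] [StarRing V] [Ring B] [Algebra ℂ B] [StarRing B]
variable {Ω : Type} [Ring Ω] [Algebra ℂ Ω]
variable {C : GroupCalc A Gw} {P : QPB A V B}

lemma dagger_gen (O : Calc A Gw V B Ω C P) (g : A →ₗ[ℂ] Gw) (R : B ⊗[ℂ] A →ₗ[ℂ] Ω ⊗[ℂ] Gw)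
    (hR : ∀ (b' : B) (a' : A), R (b' ⊗ₜ a') = O.ιB b' ⊗ₜ
      (LinearMap.mul' ℂ Gw ((map C.ι.toLinearMap g) (Coalgebra.comul (R := ℂ) a'))))
    {b : B} {s : Finset ℕ} {bk : ℕ → B} {ck : ℕ → A}
    (hF : P.F b = ∑ k ∈ s, bk k ⊗ₜ ck k) :
    ∑ k ∈ s, (Gmap O (P.F (bk k))) * ((1 : Ω) ⊗ₜ g (ck k)) = R (P.F b) := by
  classical
  set ψ : B ⊗[ℂ] (A ⊗[ℂ] A) →ₗ[ℂ] Ω ⊗[ℂ] Gw :=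
    map O.ιB.toLinearMap ((LinearMap.mul' ℂ Gw) ∘ₗ map C.ι.toLinearMap g) with hψ
  have claim1 : ∀ (z : B ⊗[ℂ] A) (c : A),
      ψ ((TensorProduct.assoc ℂ B A A) (z ⊗ₜ c)) = (Gmap O z) * ((1 : Ω) ⊗ₜ g c) := by
    intro z c
    induction z using TensorProduct.induction_on with
    | zero => simp
    | tmul b' a' =>
      rw [TensorProduct.assoc_tmul, hψ, map_tmul, LinearMap.comp_apply, map_tmul,
        LinearMap.mul'_apply, Gmap_tmul, Algebra.TensorProduct.tmul_mul_tmul, mul_one]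
      rfl
    | add x y hx hy =>
      rw [TensorProduct.add_tmul, map_add, map_add, hx, hy, map_add, add_mul]
  have claim2 : ∀ z : B ⊗[ℂ] A,
      ψ ((map LinearMap.id (Coalgebra.comul (R := ℂ))) z) = R z := by
    intro z
    induction z using TensorProduct.induction_on with
    | zero => simp
    | tmul b' a' =>
      rw [map_tmul, LinearMap.id_apply, hψ, map_tmul, LinearMap.comp_apply, hR]
      rfl
    | add x y hx hy => rw [map_add, map_add, hx, hy, map_add]
  have hmapF : (map P.F.toLinearMap LinearMap.id) (P.F b) =
      ∑ k ∈ s, (P.F (bk k)) ⊗ₜ ck k := by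
    rw [hF, map_sum]
    exact Finset.sum_congr rfl fun k _ => by rw [map_tmul]; rfl
  calc ∑ k ∈ s, (Gmap O (P.F (bk k))) * ((1 : Ω) ⊗ₜ g (ck k))
      = ∑ k ∈ s, ψ ((TensorProduct.assoc ℂ B A A) ((P.F (bk k)) ⊗ₜ ck k)) :=
        Finset.sum_congr rfl fun k _ => (claim1 _ _).symm
    _ = ψ ((TensorProduct.assoc ℂ B A A) ((map P.F.toLinearMap LinearMap.id) (P.F b))) := by
        rw [hmapF, map_sum, map_sum]
    _ = ψ ((map LinearMap.id (Coalgebra.comul (R := ℂ))) (P.F b)) := by rw [P.coassoc_F b]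
    _ = R (P.F b) := claim2 _

lemma dagger_circ (O : Calc A Gw V B Ω C P) (η : Gw)
    {b : B} {s : Finset ℕ} {bk : ℕ → B} {ck : ℕ → A}
    (hF : P.F b = ∑ k ∈ s, bk k ⊗ₜ ck k) :
    ∑ k ∈ s, (Gmap O (P.F (bk k))) * ((1 : Ω) ⊗ₜ C.circ η (ck k)) =
      ((1 : Ω) ⊗ₜ η) * Gmap O (P.F b) := by
  have h := dagger_gen O (C.circ η)
    ((LinearMap.mulLeft ℂ ((1 : Ω) ⊗ₜ η)) ∘ₗ (map O.ιB.toLinearMap C.ι.toLinearMap))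
    (fun b' a' => ?_) hF
  · rw [h, LinearMap.comp_apply, LinearMap.mulLeft_apply, Gmap_eq_map]
  · rw [LinearMap.comp_apply, map_tmul, LinearMap.mulLeft_apply,
      Algebra.TensorProduct.tmul_mul_tmul, one_mul, circ_expand]
    rfl

lemma dagger_pi (O : Calc A Gw V B Ω C P)
    {b : B} {s : Finset ℕ} {bk : ℕ → B} {ck : ℕ → A}
    (hF : P.F b = ∑ k ∈ s, bk k ⊗ₜ ck k) :
    ∑ k ∈ s, (Gmap O (P.F (bk k))) * ((1 : Ω) ⊗ₜ C.π (ck k)) =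
      (map LinearMap.id C.S.d) (Gmap O (P.F b)) := by
  refine dagger_gen O C.π ((map LinearMap.id C.S.d) ∘ₗ
    (map O.ιB.toLinearMap C.ι.toLinearMap)) (fun b' a' => ?_) hF
  rw [LinearMap.comp_apply, map_tmul, map_tmul, LinearMap.id_apply, pi_expand]
  rfl

end Bridge4

section Bridge5
set_option linter.unusedSectionVars false
set_option linter.unusedVariables false
variable {A : Type} [Ring A] [HopfAlgebra ℂ A] [StarRing A]
variable {Gw : Type} [Ring Gw] [Algebra ℂ Gw]
variable {V B : Type} [Ring V] [Algebra ℂ V] [StarRing V] [Ring B] [Algebra ℂ B] [StarRing B]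
variable {Ω : Type} [Ring Ω] [Algebra ℂ Ω]
variable {C : GroupCalc A Gw} {P : QPB A V B}

lemma mapd_mul_tmul (O : Calc A Gw V B Ω C P) (z : B ⊗[ℂ] A) (g : Gw) :
    (map LinearMap.id C.S.d) ((Gmap O z) * ((1 : Ω) ⊗ₜ g)) =
      ((map LinearMap.id C.S.d) (Gmap O z)) * ((1 : Ω) ⊗ₜ g) +
        (Gmap O z) * ((1 : Ω) ⊗ₜ C.S.d g) := by
  induction z using TensorProduct.induction_on with
  | zero => simp
  | tmul b' a' =>
    have e1 : (Gmap O (b' ⊗ₜ a')) * ((1:Ω) ⊗ₜ g) = O.ιB b' ⊗ₜ (C.ι a' * g) := by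
      rw [Gmap_tmul, Algebra.TensorProduct.tmul_mul_tmul, mul_one]
    have e2 : (Gmap O (b' ⊗ₜ a')) * ((1:Ω) ⊗ₜ C.S.d g) = O.ιB b' ⊗ₜ (C.ι a' * C.S.d g) := by
      rw [Gmap_tmul, Algebra.TensorProduct.tmul_mul_tmul, mul_one]
    have e3 : ((map LinearMap.id C.S.d) (Gmap O (b' ⊗ₜ a'))) * ((1:Ω) ⊗ₜ g)
        = O.ιB b' ⊗ₜ (C.S.d (C.ι a') * g) := by
      rw [Gmap_tmul, map_tmul, LinearMap.id_apply, Algebra.TensorProduct.tmul_mul_tmul, mul_one]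
    rw [e1, e2, e3, map_tmul, LinearMap.id_apply, C.S.leibniz (C.ι_mem a') g,
      pow_zero, one_smul, TensorProduct.tmul_add]
  | add x y hx hy => rw [map_add, add_mul, map_add, hx, hy, map_add, add_mul, add_mul]; abel

lemma Lam_vmul (O : Calc A Gw V B Ω C P) (Vd : VerData C P) (u v : B ⊗[ℂ] ↥(C.InvT)) :
    Lam O (Vd.vmul u v) = Lam O u * Lam O v := by
  induction u using TensorProduct.induction_on with
  | zero => simp
  | add x y hx hy => simp only [map_add, LinearMap.add_apply, hx, hy, add_mul]
  | tmul q η =>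
  induction v using TensorProduct.induction_on with
  | zero => simp
  | add x y hx hy => simp only [map_add, hx, hy, mul_add]
  | tmul b θ =>
  obtain ⟨s, bk, ck, hF⟩ := tensorRep (P.F b)
  have hv := Vd.vmul_spec q b η θ s bk ck hF
  have hLam : Lam O ((Vd.vmul (q ⊗ₜ η)) (b ⊗ₜ θ)) =
      LamT O (∑ k ∈ s, ((q * bk k) : B) ⊗ₜ (C.circ (η : Gw) (ck k) * (θ : Gw))) := by
    rw [← hv]; rfl
  rw [hLam, map_sum]
  have ek : ∀ k ∈ s, LamT O (((q * bk k) : B) ⊗ₜ (C.circ (η : Gw) (ck k) * (θ : Gw))) =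
      Gmap O (P.F q) * ((Gmap O (P.F (bk k)) * ((1 : Ω) ⊗ₜ C.circ (η : Gw) (ck k))) *
        ((1 : Ω) ⊗ₜ (θ : Gw))) := by
    intro k _
    rw [LamT_tmul, map_mul, map_mul]
    have h1t : (1 : Ω) ⊗ₜ[ℂ] (C.circ (η : Gw) (ck k) * (θ : Gw)) =
        ((1 : Ω) ⊗ₜ C.circ (η : Gw) (ck k)) * ((1 : Ω) ⊗ₜ (θ : Gw)) := by
      rw [Algebra.TensorProduct.tmul_mul_tmul, one_mul]
    rw [h1t, mul_assoc, ← mul_assoc (Gmap O (P.F (bk k)))]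
  rw [Finset.sum_congr rfl ek, ← Finset.mul_sum, ← Finset.sum_mul,
    dagger_circ O (η : Gw) hF, Lam_tmul, Lam_tmul, mul_assoc, ← mul_assoc ((1:Ω) ⊗ₜ (η : Gw)),
    ← mul_assoc, ← mul_assoc]
  exact mul_assoc _ _ _

lemma Lam_vd (O : Calc A Gw V B Ω C P) (Vd : VerData C P) (u : B ⊗[ℂ] ↥(C.InvT)) :
    Lam O (Vd.vd u) = (map LinearMap.id C.S.d) (Lam O u) := by
  induction u using TensorProduct.induction_on with
  | zero => simp
  | add x y hx hy => simp only [map_add, hx, hy]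
  | tmul b θ =>
  obtain ⟨s, bk, ck, hF⟩ := tensorRep (P.F b)
  have hv := Vd.vd_spec b θ s bk ck hF
  have hLam : Lam O (Vd.vd (b ⊗ₜ θ)) =
      LamT O (b ⊗ₜ (C.S.d (θ : Gw)) + ∑ k ∈ s, bk k ⊗ₜ (C.π (ck k) * (θ : Gw))) := by
    rw [← hv]; rfl
  rw [hLam, map_add, LamT_tmul, map_sum]
  have ek : ∀ k ∈ s, LamT O ((bk k) ⊗ₜ (C.π (ck k) * (θ : Gw))) =
      (Gmap O (P.F (bk k)) * ((1 : Ω) ⊗ₜ C.π (ck k))) * ((1 : Ω) ⊗ₜ (θ : Gw)) := by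
    intro k _
    rw [LamT_tmul]
    have h1t : (1 : Ω) ⊗ₜ[ℂ] (C.π (ck k) * (θ : Gw)) =
        ((1 : Ω) ⊗ₜ C.π (ck k)) * ((1 : Ω) ⊗ₜ (θ : Gw)) := by
      rw [Algebra.TensorProduct.tmul_mul_tmul, one_mul]
    rw [h1t, ← mul_assoc]
  rw [Finset.sum_congr rfl ek, ← Finset.sum_mul, dagger_pi O hF, Lam_tmul,
    mapd_mul_tmul]
  exact add_comm _ _

lemma key_eq (O : Calc A Gw V B Ω C P) (Vd : VerData C P)
    (piv : Ω →ₗ[ℂ] (B ⊗[ℂ] ↥(C.InvT)))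
    (hmul : ∀ x y : Ω, piv (x * y) = Vd.vmul (piv x) (piv y))
    (hd : ∀ x, piv (O.S.d x) = Vd.vd (piv x))
    (hid : ∀ b : B, piv (O.ιB b) =
      b ⊗ₜ (⟨(1 : Gw), C.Inv_le_InvT 0 C.Inv_one⟩ : ↥(C.InvT)))
    (x : Ω) : (map (O.S.proj 0) LinearMap.id) (O.Fh x) = Lam O (piv x) := by
  have hproj0 : (O.S.proj 0) ∘ₗ O.ιB.toLinearMap = O.ιB.toLinearMap :=
    LinearMap.ext fun b => O.S.proj_of_mem (O.ιB_mem b)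
  have hW := O.generated
    (LinearMap.ker ((map (O.S.proj 0) LinearMap.id) ∘ₗ O.Fh - (Lam O) ∘ₗ piv))
    (fun b => ?base) (fun x y hx hy => ?mul) (fun x hx => ?d) x
  · rw [LinearMap.mem_ker, LinearMap.sub_apply, LinearMap.comp_apply, LinearMap.comp_apply,
      sub_eq_zero] at hW
    exact hW
  case base =>
    rw [LinearMap.mem_ker, LinearMap.sub_apply, LinearMap.comp_apply, LinearMap.comp_apply,
      sub_eq_zero, O.Fh_extends, hid b, Lam_tmul, ← LinearMap.comp_apply,
      ← TensorProduct.map_comp, hproj0, LinearMap.id_comp]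
    rw [Gmap_eq_map, ← Algebra.TensorProduct.one_def, mul_one]
  case mul =>
    rw [LinearMap.mem_ker, LinearMap.sub_apply, LinearMap.comp_apply, LinearMap.comp_apply,
      sub_eq_zero] at hx hy
    rw [LinearMap.mem_ker, LinearMap.sub_apply, LinearMap.comp_apply, LinearMap.comp_apply,
      sub_eq_zero, O.Fh_mul, proj0_tmul, hx, hy, hmul, Lam_vmul]
  case d =>
    rw [LinearMap.mem_ker, LinearMap.sub_apply, LinearMap.comp_apply, LinearMap.comp_apply,
      sub_eq_zero] at hx
    rw [LinearMap.mem_ker, LinearMap.sub_apply, LinearMap.comp_apply, LinearMap.comp_apply,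
      sub_eq_zero, O.Fh_d, proj0_td, hx, hd, Lam_vd]

lemma pInv_Lam (O : Calc A Gw V B Ω C P) (Vd : VerData C P) (h1 : (1 : Gw) ≠ 0)
    (u : B ⊗[ℂ] ↥(C.InvT)) :
    (map LinearMap.id C.pInv) (Lam O u) = Jmap O u := by
  induction u using TensorProduct.induction_on with
  | zero => simp
  | add x y hx hy => simp only [map_add, hx, hy]
  | tmul b θ =>
  obtain ⟨s, bk, ck, hF⟩ := tensorRep (P.F b)
  rw [Lam_tmul, hF, map_sum, Finset.sum_mul, map_sum]
  have ek : ∀ k ∈ s, (map LinearMap.id C.pInv)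
      ((Gmap O (bk k ⊗ₜ ck k)) * ((1 : Ω) ⊗ₜ (θ : Gw))) =
      (Coalgebra.counit (R := ℂ) (ck k)) • (O.ιB (bk k) ⊗ₜ (θ : Gw)) := by
    intro k _
    rw [Gmap_tmul, Algebra.TensorProduct.tmul_mul_tmul, mul_one, map_tmul,
      LinearMap.id_apply, C.pInv_mod (ck k) (θ : Gw), C.pInv_id _ θ.2,
      TensorProduct.tmul_smul]
  rw [Finset.sum_congr rfl ek]
  have : ∑ k ∈ s, (Coalgebra.counit (R := ℂ) (ck k)) • (O.ιB (bk k) ⊗ₜ[ℂ] (θ : Gw)) =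
      (O.ιB (∑ k ∈ s, (Coalgebra.counit (R := ℂ) (ck k)) • bk k)) ⊗ₜ[ℂ] (θ : Gw) := by
    rw [map_sum, TensorProduct.sum_tmul]
    exact Finset.sum_congr rfl fun k _ => by
      rw [map_smul, TensorProduct.smul_tmul, TensorProduct.tmul_smul]
  rw [this, counitF O Vd h1 hF, Jmap, map_tmul]
  rfl

lemma bridge_eq (O : Calc A Gw V B Ω C P) (Vd : VerData C P)
    (piv : Ω →ₗ[ℂ] (B ⊗[ℂ] ↥(C.InvT)))
    (hmul : ∀ x y : Ω, piv (x * y) = Vd.vmul (piv x) (piv y))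
    (hd : ∀ x, piv (O.S.d x) = Vd.vd (piv x))
    (hid : ∀ b : B, piv (O.ιB b) =
      b ⊗ₜ (⟨(1 : Gw), C.Inv_le_InvT 0 C.Inv_one⟩ : ↥(C.InvT)))
    (h1 : (1 : Gw) ≠ 0) (x : Ω) :
    Jmap O (piv x) = (map (O.S.proj 0) C.pInv) (O.Fh x) := by
  rw [← pInv_Lam O Vd h1, ← key_eq O Vd piv hmul hd hid, ← LinearMap.comp_apply,
    ← TensorProduct.map_comp, LinearMap.comp_id, LinearMap.id_comp]

end Bridge5

section Bridge6
set_option linter.unusedSectionVars false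
set_option linter.unusedVariables false
variable {A : Type} [Ring A] [HopfAlgebra ℂ A] [StarRing A]
variable {Gw : Type} [Ring Gw] [Algebra ℂ Gw]
variable {V B : Type} [Ring V] [Algebra ℂ V] [StarRing V] [Ring B] [Algebra ℂ B] [StarRing B]
variable {Ω : Type} [Ring Ω] [Algebra ℂ Ω]
variable {C : GroupCalc A Gw} {P : QPB A V B}

lemma bigradeRep (O : Calc A Gw V B Ω C P) (z : Ω ⊗[ℂ] Gw) :
    ∃ N, ∀ M, N ≤ M → z = ∑ i ∈ Finset.range M, ∑ j ∈ Finset.range M,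
      (map (O.S.proj i) (C.S.proj j)) z := by
  obtain ⟨s, xk, yk, rfl⟩ := tensorRep z
  choose Nx hNx using fun k => grSum O.S.toGrStarAlg (xk k)
  choose Ny hNy using fun k => grSum C.S.toGrStarAlg (yk k)
  refine ⟨s.sup Nx + s.sup Ny, fun M hM => ?_⟩
  have hx : ∀ k ∈ s, xk k = ∑ i ∈ Finset.range M, O.S.proj i (xk k) := fun k hk =>
    hNx k M (le_trans (le_trans (Finset.le_sup hk) (Nat.le_add_right _ _)) hM)
  have hy : ∀ k ∈ s, yk k = ∑ j ∈ Finset.range M, C.S.proj j (yk k) := fun k hk =>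
    hNy k M (le_trans (le_trans (Finset.le_sup hk) (Nat.le_add_left _ _)) hM)
  have expand : ∀ i j : ℕ, (map (O.S.proj i) (C.S.proj j)) (∑ k ∈ s, xk k ⊗ₜ[ℂ] yk k)
      = ∑ k ∈ s, (O.S.proj i (xk k)) ⊗ₜ[ℂ] (C.S.proj j (yk k)) := by
    intro i j
    rw [map_sum]
    exact Finset.sum_congr rfl fun k _ => map_tmul _ _ _ _
  rw [Finset.sum_congr rfl fun i (_ : i ∈ Finset.range M) =>
    Finset.sum_congr rfl fun j (_ : j ∈ Finset.range M) => expand i j]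
  rw [Finset.sum_congr rfl fun i (_ : i ∈ Finset.range M) => Finset.sum_comm, Finset.sum_comm]
  refine Finset.sum_congr rfl fun k hk => ?_
  conv_lhs => rw [hx k hk, hy k hk]
  rw [TensorProduct.sum_tmul]
  exact Finset.sum_congr rfl fun i _ => TensorProduct.tmul_sum _ _ _

lemma proj0_pInv_grade (O : Calc A Gw V B Ω C P) (n : ℕ) (y : Ω) (hy : y ∈ O.S.gr n) :
    (map (O.S.proj 0) C.pInv) (O.Fh y) =
      (map (O.S.proj 0) (C.pInv ∘ₗ C.S.proj n)) (O.Fh y) := by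
  obtain ⟨N, hN⟩ := bigradeRep O (O.Fh y)
  have hz := hN (N + n + 1) (by omega)
  have comp1 : ∀ (f f' : Ω →ₗ[ℂ] Ω) (g h : Gw →ₗ[ℂ] Gw) (w : Ω ⊗[ℂ] Gw),
      (map f g) ((map f' h) w) = (map (f ∘ₗ f') (g ∘ₗ h)) w := fun f f' g h w => by
    rw [TensorProduct.map_comp]; rfl
  have term : ∀ i j : ℕ, (map (O.S.proj 0) C.pInv) ((map (O.S.proj i) (C.S.proj j)) (O.Fh y))
      = (map (O.S.proj 0) (C.pInv ∘ₗ C.S.proj n)) ((map (O.S.proj i) (C.S.proj j)) (O.Fh y)) := by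
    intro i j
    by_cases hij : i + j = n
    · by_cases hi : i = 0
      · subst hi
        have hj : j = n := by omega
        rw [hj, comp1, comp1]
        congr 2
        refine LinearMap.ext fun g => ?_
        rw [LinearMap.comp_apply, LinearMap.comp_apply, LinearMap.comp_apply,
          C.S.proj_of_mem (C.S.proj_mem n g)]
      · rw [comp1, comp1]
        have h0 : (O.S.proj 0) ∘ₗ (O.S.proj i) = 0 := LinearMap.ext fun x => by
          rw [LinearMap.comp_apply, O.S.proj_of_ne (O.S.proj_mem i x) (Ne.symm hi),
            LinearMap.zero_apply]
        rw [h0, TensorProduct.map_zero_left, TensorProduct.map_zero_left]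
    · rw [O.Fh_grade hy i j hij, map_zero, map_zero]
  conv_lhs => rw [hz]
  conv_rhs => rw [hz]
  rw [map_sum, map_sum]
  refine Finset.sum_congr rfl fun i _ => ?_
  rw [map_sum, map_sum]
  exact Finset.sum_congr rfl fun j _ => term i j

end Bridge6


section Statement

variable {A : Type} [Ring A] [HopfAlgebra ℂ A] [StarRing A]
variable {Gw : Type} [Ring Gw] [Algebra ℂ Gw]
variable {V B : Type} [Ring V] [Algebra ℂ V] [StarRing V] [Ring B] [Algebra ℂ B] [StarRing B]
variable {Ω : Type} [Ring Ω] [Algebra ℂ Ω]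
variable {C : GroupCalc A Gw} {P : QPB A V B}

/-- The sequence `0 → hor¹(P) → Ω¹(P) → ver¹(P) → 0` is exact:
the verticalization homomorphism `π_v` maps `Ω¹(P)` onto `ver¹(P) = B ⊗ Γ_inv`,
and its kernel in `Ω¹(P)` is exactly `hor¹(P)`. -/
theorem statement5 (O : Calc A Gw V B Ω C P) (Vd : VerData C P)
    (piv : Ω →ₗ[ℂ] (B ⊗[ℂ] ↥(C.InvT)))
    (hmul : ∀ x y : Ω, piv (x * y) = Vd.vmul (piv x) (piv y))
    (hd : ∀ x, piv (O.S.d x) = Vd.vd (piv x))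
    (hid : ∀ b : B, piv (O.ιB b) =
      b ⊗ₜ (⟨(1 : Gw), C.Inv_le_InvT 0 C.Inv_one⟩ : ↥(C.InvT))) :
    (∀ w ∈ O.S.gr 1, piv w ∈ verGr C 1) ∧
    (∀ v ∈ verGr C 1, ∃ w ∈ O.S.gr 1, piv w = v) ∧
    (∀ w ∈ O.S.gr 1, (piv w = 0 ↔ w ∈ O.horSub)) := by
  classical
  have comp1 : ∀ (f f' : Ω →ₗ[ℂ] Ω) (g h : Gw →ₗ[ℂ] Gw) (w : Ω ⊗[ℂ] Gw),
      (map f g) ((map f' h) w) = (map (f ∘ₗ f') (g ∘ₗ h)) w := fun f f' g h w => by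
    rw [TensorProduct.map_comp]; rfl
  by_cases h1 : (1 : Gw) = 0
  · -- degenerate case: `Γ^∧` is the zero ring
    have hGw : ∀ g : Gw, g = 0 := fun g => by
      calc g = g * 1 := (mul_one g).symm
        _ = g * 0 := by rw [h1]
        _ = 0 := mul_zero g
    have hBT : ∀ v : B ⊗[ℂ] ↥(C.InvT), v = 0 := by
      intro v
      induction v using TensorProduct.induction_on with
      | zero => rfl
      | tmul b θ =>
        have hθ : θ = 0 := Subtype.ext (hGw (θ : Gw))
        rw [hθ, TensorProduct.tmul_zero]
      | add x y hx hy => rw [hx, hy, add_zero]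
    have hOG : ∀ z : Ω ⊗[ℂ] Gw, z = 0 := by
      intro z
      induction z using TensorProduct.induction_on with
      | zero => rfl
      | tmul w g => rw [hGw g, TensorProduct.tmul_zero]
      | add x y hx hy => rw [hx, hy, add_zero]
    refine ⟨fun w _ => ?_, fun v _ => ⟨0, Submodule.zero_mem _, ?_⟩, fun w _ => ?_⟩
    · rw [hBT (piv w)]; exact Submodule.zero_mem _
    · rw [map_zero, hBT v]
    · constructor
      · intro _
        exact LinearMap.mem_ker.mpr (hOG _)
      · intro _
        exact hBT _
  · -- main case
    obtain ⟨rΩ, hrΩ⟩ := leftInv_exists O.ιB.toLinearMap O.ιB_inj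
    have hβ : O.ιB.toLinearMap ∘ₗ (rΩ ∘ₗ O.S.proj 0) = O.S.proj 0 := by
      refine LinearMap.ext fun x => ?_
      obtain ⟨b, hb⟩ := O.gr0_eq (O.S.proj 0 x) (O.S.proj_mem 0 x)
      rw [LinearMap.comp_apply, LinearMap.comp_apply, ← hb]
      have hr : rΩ (O.ιB b) = b := LinearMap.congr_fun hrΩ b
      rw [hr]
      rfl
    set pInv1 : Gw →ₗ[ℂ] ↥(C.Inv 1) := LinearMap.codRestrict (C.Inv 1)
      (C.pInv ∘ₗ C.S.proj 1) (fun y => C.pInv_mem (C.S.proj_mem 1 y)) with hpInv1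
    have hbr : ∀ (n : ℕ) (y : Ω), y ∈ O.S.gr n → Jmap O (piv y) =
        (map (O.S.proj 0) (C.pInv ∘ₗ C.S.proj n)) (O.Fh y) := fun n y hy => by
      rw [bridge_eq O Vd piv hmul hd hid h1 y, proj0_pInv_grade O n y hy]
    have hGproj0 : (C.S.proj 0) ∘ₗ (C.S.proj 0) = C.S.proj 0 :=
      LinearMap.ext fun g => C.S.proj_of_mem (C.S.proj_mem 0 g)
    refine ⟨?_, ?_, ?_⟩
    · -- part 1: piv maps Ω¹ into ver¹
      intro w hw
      have e1 : (Jmap O) ∘ₗ ((map LinearMap.id (Submodule.inclusion (C.Inv_le_InvT 1)))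
          ∘ₗ (map (rΩ ∘ₗ O.S.proj 0) pInv1)) = map (O.S.proj 0) (C.pInv ∘ₗ C.S.proj 1) := by
        have c1 : O.ιB.toLinearMap ∘ₗ (LinearMap.id ∘ₗ (rΩ ∘ₗ O.S.proj 0)) = O.S.proj 0 := by
          rw [LinearMap.id_comp]; exact hβ
        have c2 : C.InvT.subtype ∘ₗ ((Submodule.inclusion (C.Inv_le_InvT 1)) ∘ₗ pInv1) =
            C.pInv ∘ₗ C.S.proj 1 := LinearMap.ext fun g => rfl
        rw [Jmap, ← TensorProduct.map_comp, ← TensorProduct.map_comp, c1, c2]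
      have e2 := LinearMap.congr_fun e1 (O.Fh w)
      simp only [LinearMap.comp_apply] at e2
      refine ⟨(map (rΩ ∘ₗ O.S.proj 0) pInv1) (O.Fh w), ?_⟩
      apply Jmap_inj O
      rw [hbr 1 w hw]
      exact e2
    · -- part 2: surjectivity onto ver¹
      intro v hv
      have hsurj : ∃ x : Ω, piv x = v := by
        have hmem := Vd.vgenerated (LinearMap.range piv)
          (fun b => ⟨O.ιB b, hid b⟩)
          (fun x y hx hy => by
            obtain ⟨x', rfl⟩ := hx
            obtain ⟨y', rfl⟩ := hy
            exact ⟨x' * y', hmul x' y'⟩)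
          (fun x hx => by
            obtain ⟨x', rfl⟩ := hx
            exact ⟨O.S.d x', hd x'⟩) v
        exact hmem
      obtain ⟨u, hu⟩ := hv
      obtain ⟨x, hx⟩ := hsurj
      obtain ⟨N, hN⟩ := grSum O.S.toGrStarAlg x
      refine ⟨O.S.proj 1 x, O.S.proj_mem 1 x, ?_⟩
      apply Jmap_inj O
      have hQJ : ∀ u' : B ⊗[ℂ] ↥(C.Inv 1), (map LinearMap.id (C.S.proj 1))
          (Jmap O ((map LinearMap.id (Submodule.inclusion (C.Inv_le_InvT 1))) u')) =
          Jmap O ((map LinearMap.id (Submodule.inclusion (C.Inv_le_InvT 1))) u') := by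
        intro u'
        induction u' using TensorProduct.induction_on with
        | zero => rw [map_zero, map_zero, map_zero]
        | tmul b θ =>
          rw [map_tmul, Jmap, map_tmul, map_tmul, LinearMap.id_apply, LinearMap.id_apply]
          congr 1
          exact C.S.proj_of_mem (C.Inv_le 1 θ.2)
        | add z₁ z₂ hz₁ hz₂ => rw [map_add, map_add, map_add, hz₁, hz₂]
      have hQv : (map LinearMap.id (C.S.proj 1)) (Jmap O v) = Jmap O v := by
        rw [← hu]
        exact hQJ u
      have hxM : x = ∑ n ∈ Finset.range (N + 2), O.S.proj n x := hN (N + 2) (by omega)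
      have hsum : Jmap O v = ∑ n ∈ Finset.range (N + 2), Jmap O (piv (O.S.proj n x)) := by
        rw [← hx]
        conv_lhs => rw [hxM]
        rw [map_sum, map_sum]
      have hterm : ∀ n : ℕ, (map LinearMap.id (C.S.proj 1)) (Jmap O (piv (O.S.proj n x)))
          = if n = 1 then Jmap O (piv (O.S.proj n x)) else 0 := by
        intro n
        rw [hbr n _ (O.S.proj_mem n x), comp1]
        by_cases hn : n = 1
        · subst hn
          rw [if_pos rfl]
          have c2' : (C.S.proj 1) ∘ₗ (C.pInv ∘ₗ C.S.proj 1) = C.pInv ∘ₗ C.S.proj 1 :=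
            LinearMap.ext fun g =>
              C.S.proj_of_mem (C.Inv_le 1 (C.pInv_mem (C.S.proj_mem 1 g)))
          rw [LinearMap.id_comp, c2']
        · rw [if_neg hn]
          have h0 : (C.S.proj 1) ∘ₗ (C.pInv ∘ₗ C.S.proj n) = 0 := LinearMap.ext fun g => by
            rw [LinearMap.comp_apply, LinearMap.comp_apply,
              C.S.proj_of_ne (C.Inv_le n (C.pInv_mem (C.S.proj_mem n g))) (Ne.symm hn),
              LinearMap.zero_apply]
          rw [h0, TensorProduct.map_zero_right]
          rfl
      have final : (map LinearMap.id (C.S.proj 1)) (Jmap O v) =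
          Jmap O (piv (O.S.proj 1 x)) := by
        rw [hsum, map_sum, Finset.sum_congr rfl fun n _ => hterm n,
          Finset.sum_ite_eq' (Finset.range (N + 2)) 1
            (fun n => Jmap O (piv (O.S.proj n x))),
          if_pos (Finset.mem_range.mpr (by omega))]
      rw [← final, hQv]
    · -- part 3: the kernel is hor¹
      intro w hw
      have hkey := key_eq O Vd piv hmul hd hid w
      constructor
      · intro hpw
        have h0 : (map (O.S.proj 0) (LinearMap.id : Gw →ₗ[ℂ] Gw)) (O.Fh w) = 0 := by
          rw [hkey, hpw, map_zero]
        obtain ⟨N, hN⟩ := bigradeRep O (O.Fh w)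
        have hz := hN (N + 2) (by omega)
        rw [Calc.horSub, LinearMap.mem_ker, LinearMap.sub_apply, LinearMap.comp_apply,
          sub_eq_zero]
        have hPij : ∀ i j : ℕ, (map (O.S.proj i) (C.S.proj j)) (O.Fh w) =
            (map LinearMap.id (C.S.proj 0)) ((map (O.S.proj i) (C.S.proj j)) (O.Fh w)) := by
          intro i j
          by_cases hij : i + j = 1
          · by_cases hj : j = 0
            · subst hj
              refine Eq.symm ?_
              rw [comp1, LinearMap.id_comp, hGproj0]
            · have hj1 : j = 1 := by omega
              have hi0 : i = 0 := by omega
              have hv0 : (map (O.S.proj i) (C.S.proj j)) (O.Fh w) = 0 := by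
                rw [hi0, hj1]
                have e : (map (O.S.proj 0) (C.S.proj 1)) (O.Fh w) =
                    (map LinearMap.id (C.S.proj 1))
                      ((map (O.S.proj 0) LinearMap.id) (O.Fh w)) := by
                  rw [comp1, LinearMap.id_comp, LinearMap.comp_id]
                rw [e, h0, map_zero]
              rw [hv0, map_zero]
          · rw [O.Fh_grade hw i j hij, map_zero]
        conv_lhs => rw [hz]
        conv_rhs => rw [hz]
        rw [map_sum]
        refine Finset.sum_congr rfl fun i _ => ?_
        rw [map_sum]
        exact Finset.sum_congr rfl fun j _ => hPij i j
      · intro hhor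
        rw [Calc.horSub, LinearMap.mem_ker, LinearMap.sub_apply, LinearMap.comp_apply,
          sub_eq_zero] at hhor
        have h0 : (map (O.S.proj 0) (LinearMap.id : Gw →ₗ[ℂ] Gw)) (O.Fh w) = 0 := by
          conv_lhs => rw [hhor]
          rw [comp1, LinearMap.comp_id, LinearMap.id_comp]
          exact O.Fh_grade hw 0 0 (by omega)
        have hJ : Jmap O (piv w) = 0 := by
          rw [bridge_eq O Vd piv hmul hd hid h1 w]
          have e : (map (O.S.proj 0) C.pInv) (O.Fh w) =
              (map LinearMap.id C.pInv) ((map (O.S.proj 0) LinearMap.id) (O.Fh w)) := by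
            rw [comp1, LinearMap.id_comp, LinearMap.comp_id]
          rw [e, h0, map_zero]
        apply Jmap_inj O
        rw [hJ, map_zero]


end Statement

end
end
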